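/- arXiv:2403.20037 — 5 statements merged into one kernel-verified Lean document; each statement's English description precedes it below -/
import Mathlib

section
/- Assume the abc-conjecture: for every ε > 0 there exists K > 0 such that for all pairwise coprime positive integers p, q, s with p + q = s one has s ≤ K · rad(p·q·s)^{1+ε}. Let c > 1 be a fixed integer satisfying at least one of the following conditions: (i) c ≢ 0 (mod 9) and no prime factor of c is congruent to 1 modulo 3; (ii) c is prime. Then there are only finitely many pairs (a, b) of integers greater than 1 with a, b, c pairwise relatively prime for which the equation a^x + b^y = c^z has at least two solutions (x, y, z) in positive integers. -/
/-- The radical of a positive integer: the product of its distinct prime factors. -/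
def rad (n : ℕ) : ℕ := n.primeFactors.prod id

lemma rad_pos (n : ℕ) : 0 < rad n :=
  Finset.prod_pos (fun _ hp => (Nat.prime_of_mem_primeFactors hp).pos)

lemma rad_le {n : ℕ} (hn : n ≠ 0) : rad n ≤ n :=
  Nat.le_of_dvd (Nat.pos_of_ne_zero hn) (Nat.prod_primeFactors_dvd n)

lemma rad_pow (n : ℕ) {k : ℕ} (hk : k ≠ 0) : rad (n ^ k) = rad n := by
  unfold rad; rw [Nat.primeFactors_pow _ hk]

lemma rad_mul_le {m n : ℕ} (hm : m ≠ 0) (hn : n ≠ 0) : rad (m * n) ≤ rad m * rad n := by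
  unfold rad
  rw [Nat.primeFactors_mul hm hn, ← Finset.union_sdiff_self_eq_union,
    Finset.prod_union Finset.sdiff_disjoint.symm]
  refine Nat.mul_le_mul le_rfl ?_
  refine Finset.prod_le_prod_of_subset_of_one_le' (Finset.sdiff_subset) ?_
  intro i hi _; exact (Nat.prime_of_mem_primeFactors hi).one_lt.le

lemma int_coprime_pow_cancel {c b : ℕ} (h : Nat.Coprime b c) (z y : ℕ) {X : ℤ}
    (hd : ((c:ℤ))^z ∣ (b:ℤ)^y * X) : ((c:ℤ))^z ∣ X := by
  have hco : IsCoprime ((c:ℤ)^z) ((b:ℤ)^y) :=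
    (Nat.isCoprime_iff_coprime.mpr h.symm).pow
  exact hco.dvd_of_dvd_mul_left hd

lemma natsub_of_int {c z m n : ℕ} (hmn : n ≤ m) (hd : ((c:ℤ))^z ∣ (m:ℤ) - n) : c^z ∣ m - n := by
  have h1 : ((m - n : ℕ) : ℤ) = (m:ℤ) - n := by push_cast [hmn]; ring
  have : ((c^z : ℕ) : ℤ) ∣ ((m - n : ℕ) : ℤ) := by rw [h1]; push_cast; exact hd
  exact_mod_cast this

section Master

variable {κ c : ℕ}
  (M : ∀ p q s : ℕ, 0 < p → 0 < q → 0 < s → Nat.gcd p q = 1 → Nat.gcd p s = 1 →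
      Nat.gcd q s = 1 → p + q = s → s ^ 10 ≤ κ * rad (p * q * s) ^ 11)

include M

lemma sol_bound {a b x y z : ℕ} (ha : 1 < a) (hb : 1 < b) (hc : 1 < c)
    (hab : Nat.Coprime a b) (hac : Nat.Coprime a c) (hbc : Nat.Coprime b c)
    (hx : 0 < x) (hy : 0 < y) (hz : 0 < z)
    (e : a ^ x + b ^ y = c ^ z) : (c ^ z) ^ 10 ≤ κ * (a * b * c) ^ 11 := by
  have ha0 : 0 < a := by omega
  have hb0 : 0 < b := by omega
  have hc0 : 0 < c := by omega
  have h := M (a^x) (b^y) (c^z) (pow_pos ha0 x) (pow_pos hb0 y) (pow_pos hc0 z)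
    (Nat.Coprime.pow x y hab) (Nat.Coprime.pow x z hac) (Nat.Coprime.pow y z hbc) e
  refine h.trans (Nat.mul_le_mul le_rfl (Nat.pow_le_pow_left ?_ 11))
  calc rad (a^x * b^y * c^z) ≤ rad (a^x * b^y) * rad (c^z) :=
        rad_mul_le (by positivity) (by positivity)
    _ ≤ (rad (a^x) * rad (b^y)) * rad (c^z) :=
        Nat.mul_le_mul (rad_mul_le (by positivity) (by positivity)) le_rfl
    _ = (rad a * rad b) * rad c := by
        rw [rad_pow _ hx.ne', rad_pow _ hy.ne', rad_pow _ hz.ne']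
    _ ≤ (a * b) * c := Nat.mul_le_mul (Nat.mul_le_mul (rad_le ha0.ne') (rad_le hb0.ne'))
        (rad_le hc0.ne')

lemma succ_bound {n : ℕ} (hn : 0 < n) : (n+1) ^ 10 ≤ κ * rad (n * (n+1)) ^ 11 := by
  have h := M 1 n (n+1) one_pos hn (by omega) (Nat.gcd_one_left n) (Nat.gcd_one_left (n+1))
    (Nat.coprime_self_add_right.mpr (Nat.coprime_one_right n)) (by omega)
  rwa [one_mul] at h

lemma ybound (hκ : 0 < κ) {a b y z : ℕ} (ha : 1 < a) (hb : 1 < b) (hc : 1 < c)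
    (hA9 : a^9 ≤ κ * b^11 * c^11)
    (hP : (c^z)^10 ≤ κ * (a*b*c)^11)
    (hlt : b^y < c^z) (h3 : 3 ≤ y) : a ≤ κ^4 * c^40 := by
  have hb0 : 0 < b := by omega
  have h30 : b^30 ≤ κ * (a*b*c)^11 := by
    calc b^30 = (b^3)^10 := by ring
      _ ≤ (b^y)^10 := Nat.pow_le_pow_left (Nat.pow_le_pow_right (by omega) h3) 10
      _ ≤ (c^z)^10 := Nat.pow_le_pow_left hlt.le 10
      _ ≤ κ * (a*b*c)^11 := hP
  have h19 : b^19 ≤ κ * a^11 * c^11 := by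
    refine Nat.le_of_mul_le_mul_left ?_ (pow_pos hb0 11)
    calc b^11 * b^19 = b^30 := by ring
      _ ≤ κ * (a*b*c)^11 := h30
      _ = b^11 * (κ * a^11 * c^11) := by ring
  have h50 : b^50 ≤ κ^20 * c^220 := by
    refine Nat.le_of_mul_le_mul_left ?_ (pow_pos hb0 121)
    calc b^121 * b^50 = (b^19)^9 := by ring
      _ ≤ (κ * a^11 * c^11)^9 := Nat.pow_le_pow_left h19 9
      _ = κ^9 * c^99 * (a^9)^11 := by ring
      _ ≤ κ^9 * c^99 * (κ * b^11 * c^11)^11 := mul_le_mul_right (Nat.pow_le_pow_left hA9 11) _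
      _ = b^121 * (κ^20 * c^220) := by ring
  have hbb : b ≤ κ^2 * c^5 := by
    have h : b^50 ≤ (κ^2 * c^5)^50 := by
      refine h50.trans ?_
      calc κ^20*c^220 ≤ κ^100 * c^250 :=
            Nat.mul_le_mul (Nat.pow_le_pow_right hκ (by omega)) (Nat.pow_le_pow_right (by omega) (by omega))
        _ = (κ^2*c^5)^50 := by ring
    exact (Nat.pow_le_pow_iff_left (by omega)).mp h
  have haa : a^9 ≤ (κ^4*c^40)^9 := by
    calc a^9 ≤ κ * b^11 * c^11 := hA9
      _ ≤ κ * (κ^2*c^5)^11 * c^11 :=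
          mul_le_mul_left (mul_le_mul_right (Nat.pow_le_pow_left hbb 11) κ) _
      _ = κ^23 * c^66 := by ring
      _ ≤ κ^36 * c^360 :=
          Nat.mul_le_mul (Nat.pow_le_pow_right hκ (by omega)) (Nat.pow_le_pow_right (by omega) (by omega))
      _ = (κ^4*c^40)^9 := by ring
  exact (Nat.pow_le_pow_iff_left (by omega)).mp haa

end Master

section Master2
variable {κ c : ℕ}
  (M : ∀ p q s : ℕ, 0 < p → 0 < q → 0 < s → Nat.gcd p q = 1 → Nat.gcd p s = 1 →
      Nat.gcd q s = 1 → p + q = s → s ^ 10 ≤ κ * rad (p * q * s) ^ 11)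
include M

lemma caseI (hκ : 0 < κ) (hc : 1 < c) {a b x y1 z1 y2 z2 : ℕ}
    (ha : 1 < a) (hb : 1 < b) (hba : b ≤ a)
    (hab : Nat.Coprime a b) (hac : Nat.Coprime a c) (hbc : Nat.Coprime b c)
    (hx : 0 < x) (hy1 : 0 < y1) (hz1 : 0 < z1) (hy2 : 0 < y2) (hz2 : 0 < z2)
    (hz12 : z1 ≤ z2)
    (e1 : a ^ x + b ^ y1 = c ^ z1) (e2 : a ^ x + b ^ y2 = c ^ z2)
    (hne : (y1, z1) ≠ (y2, z2)) : a ≤ κ^4 * c^40 := by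
  by_contra hcon
  push_neg at hcon
  have ha0 : 0 < a := by omega
  have hb0 : 0 < b := by omega
  have hc0 : 0 < c := by omega
  have P2 := sol_bound M ha hb hc hab hac hbc hx hy2 hz2 e2
  have hax : 0 < a^x := pow_pos ha0 x
  have hby1 : 0 < b^y1 := pow_pos hb0 y1
  have hby2 : 0 < b^y2 := pow_pos hb0 y2
  -- z1 < z2
  have hzlt : z1 < z2 := by
    rcases lt_or_eq_of_le hz12 with h | h
    · exact h
    · exfalso
      subst h
      have hbe : b ^ y1 = b ^ y2 := by omega
      have : y1 = y2 := Nat.pow_right_injective hb hbe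
      exact hne (by simp [this])
  have hcz : c ^ z1 < c ^ z2 := Nat.pow_lt_pow_right hc hzlt
  have hylt : y1 < y2 := by
    have hbe : b ^ y1 < b ^ y2 := by omega
    exact (Nat.pow_lt_pow_iff_right hb).mp hbe
  obtain ⟨v, hv⟩ : ∃ v, y2 = y1 + v := ⟨y2 - y1, by omega⟩
  obtain ⟨w, hw⟩ : ∃ w, z2 = z1 + w := ⟨z2 - z1, by omega⟩
  have hv0 : 0 < v := by omega
  have hw0 : 0 < w := by omega
  have e2' : a ^ x + b ^ y1 * b ^ v = c ^ z1 * c ^ w := by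
    rw [hv, hw, pow_add, pow_add] at e2; exact e2
  have hbv2 : 2 ≤ b ^ v := by
    calc 2 ≤ b := hb
      _ = b^1 := (pow_one b).symm
      _ ≤ b ^ v := Nat.pow_le_pow_right (by omega) hv0
  have hZ : ((c:ℤ))^z1 ∣ (b:ℤ)^y1 * ((b:ℤ)^v - 1) := by
    refine ⟨(c:ℤ)^w - 1, ?_⟩
    have h1 : ((a:ℤ))^x + (b:ℤ)^y1 = (c:ℤ)^z1 := by exact_mod_cast e1
    have h2 : ((a:ℤ))^x + (b:ℤ)^y1 * (b:ℤ)^v = (c:ℤ)^z1 * (c:ℤ)^w := by exact_mod_cast e2'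
    linear_combination h2 - h1
  have hdvdZ : ((c:ℤ))^z1 ∣ (b:ℤ)^v - 1 := int_coprime_pow_cancel hbc z1 y1 hZ
  have hdN : c^z1 ∣ b^v - 1 := natsub_of_int (by omega) (by push_cast; exact hdvdZ)
  obtain ⟨t, ht⟩ := hdN
  have hczp : 0 < c^z1 := pow_pos hc0 z1
  have ht' : c^z1 * t + 1 = b^v := by omega
  have ht0 : 0 < t := by
    rcases Nat.eq_zero_or_pos t with h | h
    · subst h; simp at ht'; omega
    · exact h
  have SB : (b^v)^10 ≤ κ * rad ((c^z1*t) * (b^v))^11 := by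
    have h := succ_bound M (n := c^z1 * t) (by positivity)
    rwa [ht'] at h
  have hrad : rad ((c^z1*t) * b^v) ≤ c * t * b := by
    calc rad ((c^z1*t) * b^v) ≤ rad (c^z1*t) * rad (b^v) :=
          rad_mul_le (by positivity) (by positivity)
      _ ≤ (rad (c^z1) * rad t) * rad b := by
          rw [rad_pow _ hv0.ne']
          exact Nat.mul_le_mul (rad_mul_le (by positivity) ht0.ne') le_rfl
      _ = (rad c * rad t) * rad b := by rw [rad_pow _ hz1.ne']
      _ ≤ (c * t) * b := Nat.mul_le_mul
          (Nat.mul_le_mul (rad_le hc0.ne') (rad_le ht0.ne')) (rad_le hb0.ne')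
  have SB' : (b^v)^10 ≤ κ * (c*t*b)^11 :=
    SB.trans (mul_le_mul_right (Nat.pow_le_pow_left hrad 11) κ)
  have I1 : (c^z1)^11 ≤ κ * c^11 * b^11 * b^v := by
    refine Nat.le_of_mul_le_mul_left ?_ (pow_pos (pow_pos hb0 v) 10)
    calc (b^v)^10 * (c^z1)^11 ≤ (κ * (c*t*b)^11) * (c^z1)^11 := Nat.mul_le_mul_right _ SB'
      _ = κ * c^11 * b^11 * (c^z1 * t)^11 := by ring
      _ ≤ κ * c^11 * b^11 * (b^v)^11 := mul_le_mul_right (Nat.pow_le_pow_left (by omega) 11) _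
      _ = (b^v)^10 * (κ * c^11 * b^11 * b^v) := by ring
  have Ib : (b^v)^10 ≤ κ * (a*a*c)^11 := by
    have h1 : b ^ v ≤ c ^ z2 := by
      have : b^v ≤ b^y2 := Nat.pow_le_pow_right (by omega) (by omega)
      omega
    calc (b^v)^10 ≤ (c^z2)^10 := Nat.pow_le_pow_left h1 10
      _ ≤ κ * (a*b*c)^11 := P2
      _ ≤ κ * (a*a*c)^11 := mul_le_mul_right
          (Nat.pow_le_pow_left (Nat.mul_le_mul (Nat.mul_le_mul le_rfl hba) le_rfl) 11) κ
  have hacz : a ≤ c^z1 := by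
    have h := Nat.le_self_pow hx.ne' a
    omega
  have I2 : a^88 ≤ κ^11 * c^121 * b^110 := by
    refine Nat.le_of_mul_le_mul_left ?_ (pow_pos ha0 22)
    calc a^22 * a^88 = (a^11)^10 := by ring
      _ ≤ ((c^z1)^11)^10 := Nat.pow_le_pow_left (Nat.pow_le_pow_left hacz 11) 10
      _ ≤ (κ * c^11 * b^11 * b^v)^10 := Nat.pow_le_pow_left I1 10
      _ = κ^10 * c^110 * b^110 * (b^v)^10 := by ring
      _ ≤ κ^10 * c^110 * b^110 * (κ * (a*a*c)^11) := mul_le_mul_right Ib _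
      _ = a^22 * (κ^11 * c^121 * b^110) := by ring
  rcases le_or_gt y2 2 with hy2le | hy2gt
  · -- y1 = 1, y2 = 2, v = 1
    have hy1e : y1 = 1 := by omega
    have hv1 : v = 1 := by omega
    have hb1 : b^y1 < c^z1 := by omega
    rw [hy1e, pow_one] at hb1
    have hdvd' : c^z1 ∣ b^v - 1 := ⟨t, ht⟩
    rw [hv1, pow_one] at hdvd'
    have : c^z1 ≤ b - 1 := Nat.le_of_dvd (by omega) hdvd'
    omega
  · -- y2 ≥ 3
    have h30 : b ^ 30 ≤ κ * (a*a*c)^11 := by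
      have hby2c : b^y2 ≤ c^z2 := by omega
      calc b^30 = (b^3)^10 := by ring
        _ ≤ (b^y2)^10 := Nat.pow_le_pow_left (Nat.pow_le_pow_right (by omega) (by omega)) 10
        _ ≤ (c^z2)^10 := Nat.pow_le_pow_left hby2c 10
        _ ≤ κ * (a*b*c)^11 := P2
        _ ≤ κ * (a*a*c)^11 := mul_le_mul_right
            (Nat.pow_le_pow_left (Nat.mul_le_mul (Nat.mul_le_mul le_rfl hba) le_rfl) 11) κ
    have hb10 : b^10 ≤ κ^15 * c^165 := by
      refine Nat.le_of_mul_le_mul_left ?_ (pow_pos hb0 110)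
      calc b^110 * b^10 = (b^30)^4 := by ring
        _ ≤ (κ * (a*a*c)^11)^4 := Nat.pow_le_pow_left h30 4
        _ = κ^4 * a^88 * c^44 := by ring
        _ ≤ κ^4 * (κ^11 * c^121 * b^110) * c^44 :=
            mul_le_mul_left (mul_le_mul_right I2 _) _
        _ = b^110 * (κ^15 * c^165) := by ring
    have hbb : b ≤ κ^2 * c^17 := by
      have h : b^10 ≤ (κ^2*c^17)^10 := by
        refine hb10.trans ?_
        calc κ^15*c^165 ≤ κ^20 * c^170 :=
              Nat.mul_le_mul (Nat.pow_le_pow_right hκ (by omega)) (Nat.pow_le_pow_right (by omega) (by omega))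
          _ = (κ^2*c^17)^10 := by ring
      exact (Nat.pow_le_pow_iff_left (by omega)).mp h
    have hfin : a^88 ≤ (κ^4*c^40)^88 := by
      calc a^88 ≤ κ^11*c^121*b^110 := I2
        _ ≤ κ^11*c^121*(κ^2*c^17)^110 := mul_le_mul_right (Nat.pow_le_pow_left hbb 110) _
        _ = κ^231 * c^1991 := by ring
        _ ≤ κ^352 * c^3520 :=
            Nat.mul_le_mul (Nat.pow_le_pow_right hκ (by omega)) (Nat.pow_le_pow_right (by omega) (by omega))
        _ = (κ^4*c^40)^88 := by ring
    exact absurd ((Nat.pow_le_pow_iff_left (by omega)).mp hfin) (not_le.mpr hcon)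

lemma caseII (hκ : 0 < κ) (hc : 1 < c) {a b y1 z1 y2 z2 : ℕ}
    (ha : 1 < a) (hb : 1 < b) (hba : b ≤ a)
    (hab : Nat.Coprime a b) (hac : Nat.Coprime a c) (hbc : Nat.Coprime b c)
    (hy1 : 0 < y1) (hz1 : 0 < z1) (hy2 : 0 < y2) (hz2 : 0 < z2) (hz12 : z1 ≤ z2)
    (e1 : a + b ^ y1 = c ^ z1) (e2 : a^2 + b ^ y2 = c ^ z2) : a ≤ κ^4 * c^40 := by
  by_contra hcon
  push_neg at hcon
  have ha0 : 0 < a := by omega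
  have hb0 : 0 < b := by omega
  have hc0 : 0 < c := by omega
  have hby1 : 0 < b^y1 := pow_pos hb0 y1
  have hby2 : 0 < b^y2 := pow_pos hb0 y2
  have ha2 : 0 < a^2 := pow_pos ha0 2
  have P1 := sol_bound M ha hb hc hab hac hbc one_pos hy1 hz1 (by rw [pow_one]; exact e1)
  have P2 := sol_bound M ha hb hc hab hac hbc two_pos hy2 hz2 e2
  have hA9 : a^9 ≤ κ * b^11 * c^11 := by
    refine Nat.le_of_mul_le_mul_left ?_ (pow_pos ha0 11)
    calc a^11 * a^9 = (a^2)^10 := by ring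
      _ ≤ (c^z2)^10 := Nat.pow_le_pow_left (by omega) 10
      _ ≤ κ * (a*b*c)^11 := P2
      _ = a^11 * (κ * b^11 * c^11) := by ring
  have hy1le : y1 ≤ 2 := by
    by_contra h3
    push_neg at h3
    exact absurd (ybound M hκ ha hb hc hA9 P1 (by omega) h3) (not_le.mpr hcon)
  have hy2le : y2 ≤ 2 := by
    by_contra h3
    push_neg at h3
    exact absurd (ybound M hκ ha hb hc hA9 P2 (by omega) h3) (not_le.mpr hcon)
  have d1 : ((c:ℤ))^z1 ∣ (a:ℤ) + (b:ℤ)^y1 := by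
    have he1 : ((a:ℤ)) + (b:ℤ)^y1 = (c:ℤ)^z1 := by exact_mod_cast e1
    rw [he1]
  have d2 : ((c:ℤ))^z1 ∣ (a:ℤ)^2 + (b:ℤ)^y2 := by
    have hdz : ((c:ℤ))^z1 ∣ ((c:ℤ))^z2 := pow_dvd_pow _ hz12
    have he2 : ((a:ℤ))^2 + (b:ℤ)^y2 = (c:ℤ)^z2 := by exact_mod_cast e2
    rwa [← he2] at hdz
  have hD : ((c:ℤ))^z1 ∣ (b:ℤ)^y2 - (a:ℤ) * (b:ℤ)^y1 := by
    have h := dvd_sub (d1.mul_right ((b:ℤ)^y2)) (d2.mul_right ((b:ℤ)^y1))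
    have heq : ((a:ℤ) + (b:ℤ)^y1)*(b:ℤ)^y2 - ((a:ℤ)^2+(b:ℤ)^y2)*(b:ℤ)^y1
        = (a:ℤ)^1 * ((b:ℤ)^y2 - (a:ℤ)*(b:ℤ)^y1) := by ring
    rw [heq] at h
    exact int_coprime_pow_cancel hac z1 1 h
  have haltc : a < c^z1 := by omega
  have haneb : a ≠ b := by
    rintro rfl
    have hg := Nat.gcd_self a
    rw [hab] at hg
    omega
  interval_cases y1 <;> interval_cases y2
  · -- (1,1) : c^z1 ∣ a - 1
    have h : ((c:ℤ))^z1 ∣ (b:ℤ)^1 * ((1:ℤ) - (a:ℤ)) := by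
      rw [show (b:ℤ)^1*((1:ℤ)-(a:ℤ)) = (b:ℤ)^1 - (a:ℤ)*(b:ℤ)^1 by ring]
      exact hD
    have h2 := int_coprime_pow_cancel hbc z1 1 h
    have h3 : ((c:ℤ))^z1 ∣ (a:ℤ) - 1 := by
      rw [show (a:ℤ)-1 = -((1:ℤ)-(a:ℤ)) by ring]
      exact dvd_neg.mpr h2
    have h4 : c^z1 ∣ a - 1 := natsub_of_int (by omega) (by push_cast; exact h3)
    have := Nat.le_of_dvd (by omega) h4
    omega
  · -- (1,2) : c^z1 ∣ a - b
    have h : ((c:ℤ))^z1 ∣ (b:ℤ)^1 * ((b:ℤ) - (a:ℤ)) := by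
      rw [show (b:ℤ)^1*((b:ℤ)-(a:ℤ)) = (b:ℤ)^2 - (a:ℤ)*(b:ℤ)^1 by ring]
      exact hD
    have h2 := int_coprime_pow_cancel hbc z1 1 h
    have h3 : ((c:ℤ))^z1 ∣ (a:ℤ) - (b:ℤ) := by
      rw [show (a:ℤ)-(b:ℤ) = -((b:ℤ)-(a:ℤ)) by ring]
      exact dvd_neg.mpr h2
    have h4 : c^z1 ∣ a - b := natsub_of_int hba (by push_cast; exact h3)
    have := Nat.le_of_dvd (by omega) h4
    omega
  · -- (2,1) : c^z1 ∣ a*b - 1, then c^z1 ∣ b^3 + 1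
    have h : ((c:ℤ))^z1 ∣ (b:ℤ)^1 * ((1:ℤ) - (a:ℤ)*(b:ℤ)) := by
      rw [show (b:ℤ)^1*((1:ℤ)-(a:ℤ)*(b:ℤ)) = (b:ℤ)^1 - (a:ℤ)*(b:ℤ)^2 by ring]
      exact hD
    have h2 := int_coprime_pow_cancel hbc z1 1 h
    have h3 : ((c:ℤ))^z1 ∣ (a:ℤ)*(b:ℤ) - 1 := by
      rw [show (a:ℤ)*(b:ℤ)-1 = -((1:ℤ)-(a:ℤ)*(b:ℤ)) by ring]
      exact dvd_neg.mpr h2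
    have h1ab : 1 ≤ a*b := Nat.mul_pos ha0 hb0
    have hab1 : c^z1 ∣ a*b - 1 := natsub_of_int h1ab (by push_cast; exact h3)
    have heq : b^2*(a*b-1) + (a + b^2) = a*(b^3+1) := by
      zify [h1ab]; ring
    have hkey : c^z1 ∣ a*(b^3+1) := by
      rw [← heq]
      exact dvd_add (hab1.mul_left (b^2)) (by rw [e1])
    have hkey2 : c^z1 ∣ b^3+1 :=
      Nat.Coprime.dvd_of_dvd_mul_left (Nat.Coprime.pow_left z1 hac.symm) hkey
    have hcz1le : c^z1 ≤ b^3+1 := Nat.le_of_dvd (by positivity) hkey2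
    obtain ⟨t, ht⟩ := hkey2
    have ht0 : 0 < t := by
      rcases Nat.eq_zero_or_pos t with h' | h'
      · subst h'; omega
      · exact h'
    have htb : t ≤ b := by
      by_contra hbt
      push_neg at hbt
      have hc2 : b^2 + 2 ≤ c^z1 := by omega
      have h1 : (b+1)*(b^2+2) ≤ t * c^z1 := Nat.mul_le_mul (by omega) hc2
      rw [mul_comm t, ← ht] at h1
      have hexp : (b+1)*(b^2+2) = b^3+b^2+2*b+2 := by ring
      omega
    have SB : (b^3+1)^10 ≤ κ * rad (b^3 * (b^3+1))^11 := succ_bound M (by positivity)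
    have hrad : rad (b^3*(b^3+1)) ≤ b * (c*t) := by
      calc rad (b^3*(b^3+1)) ≤ rad (b^3) * rad (b^3+1) :=
            rad_mul_le (by positivity) (by positivity)
        _ = rad b * rad (b^3+1) := by rw [rad_pow _ (by norm_num)]
        _ ≤ b * (rad (c^z1) * rad t) := Nat.mul_le_mul (rad_le hb0.ne')
            (by rw [ht]; exact rad_mul_le (by positivity) ht0.ne')
        _ = b * (rad c * rad t) := by rw [rad_pow _ hz1.ne']
        _ ≤ b * (c * t) := mul_le_mul_right
            (Nat.mul_le_mul (rad_le hc0.ne') (rad_le ht0.ne')) b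
    have h8 : b^8 ≤ κ * c^11 := by
      refine Nat.le_of_mul_le_mul_left ?_ (pow_pos hb0 22)
      calc b^22 * b^8 = (b^3)^10 := by ring
        _ ≤ (b^3+1)^10 := Nat.pow_le_pow_left (by omega) 10
        _ ≤ κ * (b*(c*t))^11 := SB.trans (mul_le_mul_right (Nat.pow_le_pow_left hrad 11) κ)
        _ ≤ κ * (b*(c*b))^11 := mul_le_mul_right (Nat.pow_le_pow_left
            (mul_le_mul_right (mul_le_mul_right htb c) b) 11) κ
        _ = b^22 * (κ * c^11) := by ring
    have hbb : b ≤ κ * c^11 := le_trans (Nat.le_self_pow (by norm_num) b) h8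
    have hfin : a ≤ κ^4*c^40 := by
      have ha3 : a ≤ b^3 := by omega
      have : a ≤ (κ*c^11)^3 := le_trans ha3 (Nat.pow_le_pow_left hbb 3)
      refine this.trans ?_
      calc (κ*c^11)^3 = κ^3*c^33 := by ring
        _ ≤ κ^4*c^40 := Nat.mul_le_mul (Nat.pow_le_pow_right hκ (by omega))
            (Nat.pow_le_pow_right (by omega) (by omega))
    omega
  · -- (2,2) : c^z1 ∣ a - 1
    have h : ((c:ℤ))^z1 ∣ (b:ℤ)^2 * ((1:ℤ) - (a:ℤ)) := by
      rw [show (b:ℤ)^2*((1:ℤ)-(a:ℤ)) = (b:ℤ)^2 - (a:ℤ)*(b:ℤ)^2 by ring]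
      exact hD
    have h2 := int_coprime_pow_cancel hbc z1 2 h
    have h3 : ((c:ℤ))^z1 ∣ (a:ℤ) - 1 := by
      rw [show (a:ℤ)-1 = -((1:ℤ)-(a:ℤ)) by ring]
      exact dvd_neg.mpr h2
    have h4 : c^z1 ∣ a - 1 := natsub_of_int (by omega) (by push_cast; exact h3)
    have := Nat.le_of_dvd (by omega) h4
    omega

lemma caseIII (hκ : 0 < κ) (hc : 1 < c) {a b y1 z1 y2 z2 : ℕ}
    (ha : 1 < a) (hb : 1 < b) (hba : b ≤ a)
    (hab : Nat.Coprime a b) (hac : Nat.Coprime a c) (hbc : Nat.Coprime b c)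
    (hy1 : 0 < y1) (hz1 : 0 < z1) (hy2 : 0 < y2) (hz2 : 0 < z2) (hz12 : z1 ≤ z2)
    (e1 : a^2 + b ^ y1 = c ^ z1) (e2 : a + b ^ y2 = c ^ z2) : a ≤ κ^4 * c^40 := by
  by_contra hcon
  push_neg at hcon
  have ha0 : 0 < a := by omega
  have hb0 : 0 < b := by omega
  have hc0 : 0 < c := by omega
  have hby1 : 0 < b^y1 := pow_pos hb0 y1
  have hby2 : 0 < b^y2 := pow_pos hb0 y2
  have ha2 : 0 < a^2 := pow_pos ha0 2
  have P1 := sol_bound M ha hb hc hab hac hbc two_pos hy1 hz1 e1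
  have P2 := sol_bound M ha hb hc hab hac hbc one_pos hy2 hz2 (by rw [pow_one]; exact e2)
  have hA9 : a^9 ≤ κ * b^11 * c^11 := by
    refine Nat.le_of_mul_le_mul_left ?_ (pow_pos ha0 11)
    calc a^11 * a^9 = (a^2)^10 := by ring
      _ ≤ (c^z1)^10 := Nat.pow_le_pow_left (by omega) 10
      _ ≤ κ * (a*b*c)^11 := P1
      _ = a^11 * (κ * b^11 * c^11) := by ring
  have hy1le : y1 ≤ 2 := by
    by_contra h3
    push_neg at h3
    exact absurd (ybound M hκ ha hb hc hA9 P1 (by omega) h3) (not_le.mpr hcon)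
  have hy2le : y2 ≤ 2 := by
    by_contra h3
    push_neg at h3
    exact absurd (ybound M hκ ha hb hc hA9 P2 (by omega) h3) (not_le.mpr hcon)
  -- y2 = 2
  have hzz : c^z1 ≤ c^z2 := Nat.pow_le_pow_right (by omega) hz12
  have hb2 : 2 ≤ b^y1 := by
    calc 2 ≤ b := hb
      _ = b^1 := (pow_one b).symm
      _ ≤ b^y1 := Nat.pow_le_pow_right (by omega) hy1
  have haa2 : 2*a ≤ a^2 := by
    have : a*2 ≤ a*a := Nat.mul_le_mul_left a ha
    have : a^2 = a*a := by ring
    omega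
  have hy2two : y2 = 2 := by
    have hgt : b < b^y2 := by
      have : a < b^y2 := by omega
      omega
    have : 1 < y2 := by
      by_contra hy
      push_neg at hy
      interval_cases y2
      · simp at hgt
    omega
  subst hy2two
  have d1 : ((c:ℤ))^z1 ∣ (a:ℤ)^2 + (b:ℤ)^y1 := by
    have he1 : ((a:ℤ))^2 + (b:ℤ)^y1 = (c:ℤ)^z1 := by exact_mod_cast e1
    rw [he1]
  have d2 : ((c:ℤ))^z1 ∣ (a:ℤ) + (b:ℤ)^2 := by
    have hdz : ((c:ℤ))^z1 ∣ ((c:ℤ))^z2 := pow_dvd_pow _ hz12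
    have he2 : ((a:ℤ)) + (b:ℤ)^2 = (c:ℤ)^z2 := by exact_mod_cast e2
    rwa [← he2] at hdz
  have hD : ((c:ℤ))^z1 ∣ (a:ℤ) * (b:ℤ)^2 - (b:ℤ)^y1 := by
    have h := dvd_sub (d1.mul_right ((b:ℤ)^2)) (d2.mul_right ((b:ℤ)^y1))
    have heq : ((a:ℤ)^2 + (b:ℤ)^y1)*(b:ℤ)^2 - ((a:ℤ)+(b:ℤ)^2)*(b:ℤ)^y1
        = (a:ℤ)^1 * ((a:ℤ)*(b:ℤ)^2 - (b:ℤ)^y1) := by ring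
    rw [heq] at h
    exact int_coprime_pow_cancel hac z1 1 h
  have haltc : a^2 < c^z1 := by omega
  interval_cases y1
  · -- y1 = 1 : c^z1 ∣ a*b - 1, then c^z1 ∣ a^3 + 1
    have h : ((c:ℤ))^z1 ∣ (b:ℤ)^1 * ((a:ℤ)*(b:ℤ) - 1) := by
      rw [show (b:ℤ)^1*((a:ℤ)*(b:ℤ)-1) = (a:ℤ)*(b:ℤ)^2 - (b:ℤ)^1 by ring]
      exact hD
    have h3 := int_coprime_pow_cancel hbc z1 1 h
    have h1ab : 1 ≤ a*b := Nat.mul_pos ha0 hb0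
    have hab1 : c^z1 ∣ a*b - 1 := natsub_of_int h1ab (by push_cast; exact h3)
    have heq : a^2*(a*b-1) + (a^2 + b) = b*(a^3+1) := by
      zify [h1ab]; ring
    have hkey : c^z1 ∣ b*(a^3+1) := by
      rw [← heq]
      refine dvd_add (hab1.mul_left (a^2)) ?_
      have e1' : a^2 + b = c^z1 := by rw [← e1, pow_one]
      rw [e1']
    have hkey2 : c^z1 ∣ a^3+1 :=
      Nat.Coprime.dvd_of_dvd_mul_left (Nat.Coprime.pow_left z1 hbc.symm) hkey
    have hcz1le : c^z1 ≤ a^3+1 := Nat.le_of_dvd (by positivity) hkey2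
    obtain ⟨t, ht⟩ := hkey2
    have ht0 : 0 < t := by
      rcases Nat.eq_zero_or_pos t with h' | h'
      · subst h'; omega
      · exact h'
    have hta : t ≤ a := by
      by_contra hbt
      push_neg at hbt
      have hc2 : a^2 + 2 ≤ c^z1 := by
        have e1' : a^2 + b = c^z1 := by rw [← e1, pow_one]
        omega
      have h1 : (a+1)*(a^2+2) ≤ t * c^z1 := Nat.mul_le_mul (by omega) hc2
      rw [mul_comm t, ← ht] at h1
      have hexp : (a+1)*(a^2+2) = a^3+a^2+2*a+2 := by ring
      omega
    have SB : (a^3+1)^10 ≤ κ * rad (a^3 * (a^3+1))^11 := succ_bound M (by positivity)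
    have hrad : rad (a^3*(a^3+1)) ≤ a * (c*t) := by
      calc rad (a^3*(a^3+1)) ≤ rad (a^3) * rad (a^3+1) :=
            rad_mul_le (by positivity) (by positivity)
        _ = rad a * rad (a^3+1) := by rw [rad_pow _ (by norm_num)]
        _ ≤ a * (rad (c^z1) * rad t) := Nat.mul_le_mul (rad_le ha0.ne')
            (by rw [ht]; exact rad_mul_le (by positivity) ht0.ne')
        _ = a * (rad c * rad t) := by rw [rad_pow _ hz1.ne']
        _ ≤ a * (c * t) := mul_le_mul_right
            (Nat.mul_le_mul (rad_le hc0.ne') (rad_le ht0.ne')) a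
    have h8 : a^8 ≤ κ * c^11 := by
      refine Nat.le_of_mul_le_mul_left ?_ (pow_pos ha0 22)
      calc a^22 * a^8 = (a^3)^10 := by ring
        _ ≤ (a^3+1)^10 := Nat.pow_le_pow_left (by omega) 10
        _ ≤ κ * (a*(c*t))^11 := SB.trans (mul_le_mul_right (Nat.pow_le_pow_left hrad 11) κ)
        _ ≤ κ * (a*(c*a))^11 := mul_le_mul_right (Nat.pow_le_pow_left
            (mul_le_mul_right (mul_le_mul_right hta c) a) 11) κ
        _ = a^22 * (κ * c^11) := by ring
    have haf : a ≤ κ * c^11 := le_trans (Nat.le_self_pow (by norm_num) a) h8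
    have hmono : κ * c^11 ≤ κ^4*c^40 := by
      calc κ * c^11 = κ^1 * c^11 := by ring
        _ ≤ κ^4*c^40 := Nat.mul_le_mul (Nat.pow_le_pow_right hκ (by omega))
            (Nat.pow_le_pow_right (by omega) (by omega))
    have : a ≤ κ^4*c^40 := haf.trans hmono
    omega
  · -- y1 = 2 : c^z1 ∣ a - 1
    have h : ((c:ℤ))^z1 ∣ (b:ℤ)^2 * ((a:ℤ) - 1) := by
      rw [show (b:ℤ)^2*((a:ℤ)-1) = (a:ℤ)*(b:ℤ)^2 - (b:ℤ)^2 by ring]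
      exact hD
    have h3 := int_coprime_pow_cancel hbc z1 2 h
    have h4 : c^z1 ∣ a - 1 := natsub_of_int (by omega) (by push_cast; exact h3)
    have h5 := Nat.le_of_dvd (by omega) h4
    have : a ≤ a^2 := Nat.le_self_pow (by norm_num) a
    omega

lemma key (hκ : 0 < κ) (hc : 1 < c) {a b x1 y1 z1 x2 y2 z2 : ℕ}
    (ha : 1 < a) (hb : 1 < b) (hba : b ≤ a)
    (hab : Nat.Coprime a b) (hac : Nat.Coprime a c) (hbc : Nat.Coprime b c)
    (hx1 : 0 < x1) (hy1 : 0 < y1) (hz1 : 0 < z1)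
    (hx2 : 0 < x2) (hy2 : 0 < y2) (hz2 : 0 < z2) (hz12 : z1 ≤ z2)
    (e1 : a ^ x1 + b ^ y1 = c ^ z1) (e2 : a ^ x2 + b ^ y2 = c ^ z2)
    (hne : (x1, y1, z1) ≠ (x2, y2, z2)) : a ≤ κ^4 * c^40 := by
  rcases le_or_gt a (κ^4*c^40) with hle | hcon
  · exact hle
  exfalso
  have ha0 : 0 < a := by omega
  have hb0 : 0 < b := by omega
  have hc0 : 0 < c := by omega
  have P1 := sol_bound M ha hb hc hab hac hbc hx1 hy1 hz1 e1
  have P2 := sol_bound M ha hb hc hab hac hbc hx2 hy2 hz2 e2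
  have hby1 : 0 < b^y1 := pow_pos hb0 y1
  have hby2 : 0 < b^y2 := pow_pos hb0 y2
  have hax1 : 0 < a^x1 := pow_pos ha0 x1
  have hax2 : 0 < a^x2 := pow_pos ha0 x2
  have hxb : ∀ x z : ℕ, a^x < c^z → (c^z)^10 ≤ κ*(a*b*c)^11 → x ≤ 2 := by
    intro x z hlt hP
    by_contra h3
    push_neg at h3
    have h30 : a^22 * a^8 ≤ a^22 * (κ*c^11) := by
      calc a^22*a^8 = (a^3)^10 := by ring
        _ ≤ (a^x)^10 := Nat.pow_le_pow_left (Nat.pow_le_pow_right (by omega) h3) 10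
        _ ≤ (c^z)^10 := Nat.pow_le_pow_left hlt.le 10
        _ ≤ κ*(a*b*c)^11 := hP
        _ ≤ κ*(a*a*c)^11 := mul_le_mul_right
            (Nat.pow_le_pow_left (Nat.mul_le_mul (Nat.mul_le_mul le_rfl hba) le_rfl) 11) κ
        _ = a^22*(κ*c^11) := by ring
    have h8 : a^8 ≤ κ*c^11 := Nat.le_of_mul_le_mul_left h30 (pow_pos ha0 22)
    have h9 : a ≤ κ*c^11 := le_trans (Nat.le_self_pow (by norm_num) a) h8
    have hmono : κ * c^11 ≤ κ^4*c^40 := by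
      calc κ * c^11 = κ^1 * c^11 := by ring
        _ ≤ κ^4*c^40 := Nat.mul_le_mul (Nat.pow_le_pow_right hκ (by omega))
            (Nat.pow_le_pow_right (by omega) (by omega))
    omega
  have hx1le : x1 ≤ 2 := hxb x1 z1 (by omega) P1
  have hx2le : x2 ≤ 2 := hxb x2 z2 (by omega) P2
  interval_cases x1 <;> interval_cases x2
  · have h := caseI M hκ hc ha hb hba hab hac hbc one_pos hy1 hz1 hy2 hz2 hz12 e1 e2
      (by simp only [ne_eq, Prod.mk.injEq, true_and] at hne ⊢; exact hne)
    omega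
  · have h := caseII M hκ hc ha hb hba hab hac hbc hy1 hz1 hy2 hz2 hz12
      (by rw [← e1, pow_one]) e2
    omega
  · have h := caseIII M hκ hc ha hb hba hab hac hbc hy1 hz1 hy2 hz2 hz12 e1
      (by rw [← e2, pow_one])
    omega
  · have h := caseI M hκ hc ha hb hba hab hac hbc two_pos hy1 hz1 hy2 hz2 hz12 e1 e2
      (by simp only [ne_eq, Prod.mk.injEq, true_and] at hne ⊢; exact hne)
    omega

end Master2

/-- Assuming the abc-conjecture, if `c > 1` satisfies (i) `9 ∤ c` and no prime
factor of `c` is `≡ 1 (mod 3)`, or (ii) `c` is prime, then there are only finitely many pairs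
`(a, b)` of integers greater than `1`, pairwise coprime with `c`, for which `a^x + b^y = c^z`
has at least two solutions in positive integers. -/
theorem abc_implies_finiteness
    (habc : ∀ ε : ℝ, 0 < ε → ∃ K : ℝ, 0 < K ∧
      ∀ p q s : ℕ, 0 < p → 0 < q → 0 < s →
        Nat.gcd p q = 1 → Nat.gcd p s = 1 → Nat.gcd q s = 1 → p + q = s →
        (s : ℝ) ≤ K * (rad (p * q * s) : ℝ) ^ (1 + ε))
    (c : ℕ) (hc : 1 < c)
    (hcond : (¬ (9 ∣ c) ∧ ∀ p : ℕ, p.Prime → p ∣ c → p % 3 ≠ 1) ∨ Nat.Prime c) :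
    {p : ℕ × ℕ | 1 < p.1 ∧ 1 < p.2 ∧
      Nat.gcd p.1 p.2 = 1 ∧ Nat.gcd p.1 c = 1 ∧ Nat.gcd p.2 c = 1 ∧
      ∃ s t : ℕ × ℕ × ℕ, s ≠ t ∧
        (0 < s.1 ∧ 0 < s.2.1 ∧ 0 < s.2.2 ∧ p.1 ^ s.1 + p.2 ^ s.2.1 = c ^ s.2.2) ∧
        (0 < t.1 ∧ 0 < t.2.1 ∧ 0 < t.2.2 ∧ p.1 ^ t.1 + p.2 ^ t.2.1 = c ^ t.2.2)}.Finite := by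
  obtain ⟨K, hK0, hKle⟩ := habc (1/10) (by norm_num)
  set κ : ℕ := ⌈K^(10:ℕ)⌉₊ with hκdef
  have hκpos : 0 < κ := Nat.ceil_pos.mpr (by positivity)
  have M : ∀ p q s : ℕ, 0 < p → 0 < q → 0 < s → Nat.gcd p q = 1 → Nat.gcd p s = 1 →
      Nat.gcd q s = 1 → p + q = s → s ^ 10 ≤ κ * rad (p * q * s) ^ 11 := by
    intro p q s hp hq hs h1 h2 h3 hsum
    have hr := hKle p q s hp hq hs h1 h2 h3 hsum
    have hr0 : (0:ℝ) ≤ (rad (p*q*s) : ℝ) := by positivity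
    have h10 : ((s : ℝ)) ^ (10:ℕ) ≤ (K * (rad (p*q*s):ℝ) ^ ((1:ℝ)+1/10)) ^ (10:ℕ) :=
      pow_le_pow_left₀ (by positivity) hr 10
    have hkey : ((rad (p*q*s):ℝ) ^ ((1:ℝ)+1/10)) ^ (10:ℕ) = (rad (p*q*s):ℝ) ^ (11:ℕ) := by
      rw [← Real.rpow_natCast ((rad (p*q*s):ℝ) ^ ((1:ℝ)+1/10)) 10, ← Real.rpow_mul hr0,
        show ((1:ℝ)+1/10) * (10:ℕ) = ((11:ℕ):ℝ) by norm_num, Real.rpow_natCast]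
    have hfin : ((s:ℝ)) ^ (10:ℕ) ≤ (κ : ℝ) * (rad (p*q*s):ℝ) ^ (11:ℕ) := by
      calc ((s:ℝ)) ^ (10:ℕ) ≤ (K * (rad (p*q*s):ℝ) ^ ((1:ℝ)+1/10)) ^ (10:ℕ) := h10
        _ = K ^ (10:ℕ) * ((rad (p*q*s):ℝ) ^ ((1:ℝ)+1/10)) ^ (10:ℕ) := by ring
        _ = K ^ (10:ℕ) * (rad (p*q*s):ℝ) ^ (11:ℕ) := by rw [hkey]
        _ ≤ (κ : ℝ) * (rad (p*q*s):ℝ) ^ (11:ℕ) :=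
            mul_le_mul_of_nonneg_right (Nat.le_ceil _) (by positivity)
    exact_mod_cast hfin
  have key2 : ∀ a b : ℕ, 1 < a → 1 < b → b ≤ a → Nat.Coprime a b → Nat.Coprime a c →
      Nat.Coprime b c →
      (∃ s t : ℕ × ℕ × ℕ, s ≠ t ∧
        (0 < s.1 ∧ 0 < s.2.1 ∧ 0 < s.2.2 ∧ a ^ s.1 + b ^ s.2.1 = c ^ s.2.2) ∧
        (0 < t.1 ∧ 0 < t.2.1 ∧ 0 < t.2.2 ∧ a ^ t.1 + b ^ t.2.1 = c ^ t.2.2)) →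
      a ≤ κ^4 * c^40 := by
    rintro a b ha hb hba hab hac hbc
      ⟨⟨x1,y1,z1⟩, ⟨x2,y2,z2⟩, hst, ⟨h1x,h1y,h1z,h1e⟩, ⟨h2x,h2y,h2z,h2e⟩⟩
    rcases le_total z1 z2 with h | h
    · exact key M hκpos hc ha hb hba hab hac hbc h1x h1y h1z h2x h2y h2z h h1e h2e hst
    · exact key M hκpos hc ha hb hba hab hac hbc h2x h2y h2z h1x h1y h1z h h2e h1e (Ne.symm hst)
  refine Set.Finite.subset
    (Set.Finite.prod (Set.finite_Iic (κ^4*c^40)) (Set.finite_Iic (κ^4*c^40))) ?_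
  rintro ⟨a, b⟩ ⟨ha, hb, hab, hac, hbc, hsol⟩
  simp only [Set.mem_prod, Set.mem_Iic]
  rcases le_total b a with hba | hba
  · have h := key2 a b ha hb hba hab hac hbc hsol
    exact ⟨h, hba.trans h⟩
  · have hsol' : ∃ s t : ℕ × ℕ × ℕ, s ≠ t ∧
        (0 < s.1 ∧ 0 < s.2.1 ∧ 0 < s.2.2 ∧ b ^ s.1 + a ^ s.2.1 = c ^ s.2.2) ∧
        (0 < t.1 ∧ 0 < t.2.1 ∧ 0 < t.2.2 ∧ b ^ t.1 + a ^ t.2.1 = c ^ t.2.2) := by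
      obtain ⟨⟨x1,y1,z1⟩, ⟨x2,y2,z2⟩, hst, ⟨h1x,h1y,h1z,h1e⟩, ⟨h2x,h2y,h2z,h2e⟩⟩ := hsol
      refine ⟨(y1,x1,z1), (y2,x2,z2), ?_, ⟨h1y,h1x,h1z, by rw [add_comm]; exact h1e⟩,
        ⟨h2y,h2x,h2z, by rw [add_comm]; exact h2e⟩⟩
      simp only [ne_eq, Prod.mk.injEq] at hst ⊢
      tauto
    have h := key2 b a hb ha hba (Nat.Coprime.symm hab) hbc hac hsol'
    exact ⟨hba.trans h, h⟩
end

section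
/- Let a, b, c be pairwise relatively prime integers all greater than 1, and let d be a divisor of c with d > 2. Let g = gcd(e_d(a), e_d(b)) and define A = a^{e_d(a)/g} and B = b^{e_d(b)/g}. Then: (1) the number of solutions (x, y, z) in positive integers of a^x + b^y = c^z equals the number of solutions (X, Y, Z) in positive integers of A^X + B^Y = c^Z; and (2) e_d(A) = e_d(B). -/
section AuxEOrd

variable {d : ℕ}

private lemma pm_mul' {x y : ZMod d} (hx : x = 1 ∨ x = -1) (hy : y = 1 ∨ y = -1) :
    x * y = 1 ∨ x * y = -1 := by
  rcases hx with h | h <;> rcases hy with h' | h' <;> subst h <;> subst h' <;> simp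

private lemma pm_pow' {x : ZMod d} (hx : x = 1 ∨ x = -1) (k : ℕ) :
    x ^ k = 1 ∨ x ^ k = -1 := by
  rcases hx with h | h
  · left; simp [h]
  · subst h
    rcases Nat.even_or_odd k with hk | hk
    · left; exact hk.neg_one_pow
    · right; exact hk.neg_one_pow

private lemma divis_iff' (hd : 0 < d) (a e : ℕ) :
    ((d:ℤ) ∣ (a:ℤ)^e - 1 ∨ (d:ℤ) ∣ (a:ℤ)^e + 1) ↔
      ((a : ZMod d)^e = 1 ∨ (a : ZMod d)^e = -1) := by
  haveI : NeZero d := ⟨hd.ne'⟩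
  rw [← ZMod.intCast_zmod_eq_zero_iff_dvd, ← ZMod.intCast_zmod_eq_zero_iff_dvd]
  push_cast
  rw [sub_eq_zero, add_eq_zero_iff_eq_neg]

end AuxEOrd

/-- The extended multiplicative order of `A` modulo `M`: the least positive `e` with
`A^e ≡ 1 (mod M)` or `A^e ≡ -1 (mod M)`. -/
noncomputable def eOrd (M A : ℕ) : ℕ :=
  sInf {e : ℕ | 0 < e ∧ ((M : ℤ) ∣ (A : ℤ) ^ e - 1 ∨ (M : ℤ) ∣ (A : ℤ) ^ e + 1)}

section AuxEOrd2

variable {d : ℕ}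

private lemma eOrd_spec' (hd : 0 < d) {a : ℕ} (h : Nat.Coprime a d) :
    0 < eOrd d a ∧ ∀ e : ℕ, ((a : ZMod d)^e = 1 ∨ (a : ZMod d)^e = -1) ↔ eOrd d a ∣ e := by
  set S := {e : ℕ | 0 < e ∧ ((d:ℤ) ∣ (a:ℤ)^e - 1 ∨ (d:ℤ) ∣ (a:ℤ)^e + 1)} with hS
  have hmem : eOrd d a ∈ S := by
    apply Nat.sInf_mem
    refine ⟨d.totient, Nat.totient_pos.mpr hd, ?_⟩
    left
    have ht : (1 : ℕ) ≡ a ^ d.totient [MOD d] := (Nat.ModEq.pow_totient h).symm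
    have h2 := Nat.modEq_iff_dvd.mp ht
    push_cast at h2 ⊢
    convert h2 using 2
  obtain ⟨hpos, hdiv⟩ := hmem
  have hpm_r : (a : ZMod d) ^ eOrd d a = 1 ∨ (a : ZMod d) ^ eOrd d a = -1 :=
    (divis_iff' hd a _).mp hdiv
  refine ⟨hpos, fun e => ⟨fun hpme => ?_, ?_⟩⟩
  · set r := eOrd d a
    obtain ⟨q, t, rfl, hlt⟩ : ∃ q t, e = r * q + t ∧ t < r :=
      ⟨e / r, e % r, (Nat.div_add_mod e r).symm, Nat.mod_lt e hpos⟩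
    have h1 : (a : ZMod d) ^ (r * q) = 1 ∨ (a : ZMod d) ^ (r * q) = -1 := by
      rw [pow_mul]; exact pm_pow' hpm_r _
    have hsq : (a : ZMod d) ^ (r * q) * (a : ZMod d) ^ (r * q) = 1 := by
      rcases h1 with h' | h' <;> rw [h'] <;> ring
    have hkey : (a : ZMod d) ^ (r * q + t) * (a : ZMod d) ^ (r * q) = (a : ZMod d) ^ t := by
      rw [pow_add]
      calc (a : ZMod d) ^ (r * q) * (a : ZMod d) ^ t * (a : ZMod d) ^ (r * q)
          = (a : ZMod d) ^ t * ((a : ZMod d) ^ (r * q) * (a : ZMod d) ^ (r * q)) := by ring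
        _ = (a : ZMod d) ^ t := by rw [hsq, mul_one]
    have h2 : (a : ZMod d) ^ t = 1 ∨ (a : ZMod d) ^ t = -1 := by
      rw [← hkey]; exact pm_mul' hpme h1
    have ht0 : t = 0 := by
      by_contra h0
      have hmem' : t ∈ S := ⟨Nat.pos_of_ne_zero h0, (divis_iff' hd a _).mpr h2⟩
      have hle : r ≤ t := Nat.sInf_le hmem'
      omega
    exact ⟨q, by omega⟩
  · rintro ⟨k, rfl⟩
    rw [pow_mul]; exact pm_pow' hpm_r k

private lemma eOrd_eq_of' (hd : 0 < d) {a g : ℕ} (hg : 0 < g)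
    (h : ∀ e : ℕ, ((a : ZMod d)^e = 1 ∨ (a : ZMod d)^e = -1) ↔ g ∣ e) : eOrd d a = g := by
  have hset : {e : ℕ | 0 < e ∧ ((d:ℤ) ∣ (a:ℤ)^e - 1 ∨ (d:ℤ) ∣ (a:ℤ)^e + 1)}
      = {e : ℕ | 0 < e ∧ g ∣ e} := by
    ext e; simp only [Set.mem_setOf_eq, divis_iff' hd, h e]
  rw [eOrd, hset]
  apply le_antisymm
  · exact Nat.sInf_le ⟨hg, dvd_rfl⟩
  · have hmem := Nat.sInf_mem (⟨g, hg, dvd_rfl⟩ : Set.Nonempty {e : ℕ | 0 < e ∧ g ∣ e})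
    exact Nat.le_of_dvd hmem.1 hmem.2

end AuxEOrd2

/-- `(x, y, z)` is a solution of `a^x + b^y = c^z` in positive integers. -/
def IsSol (a b c : ℕ) (s : ℕ × ℕ × ℕ) : Prop :=
  0 < s.1 ∧ 0 < s.2.1 ∧ 0 < s.2.2 ∧ a ^ s.1 + b ^ s.2.1 = c ^ s.2.2

/-- With `d ∣ c`, `d > 2`, `g = gcd(e_d(a), e_d(b))`, `A = a^{e_d(a)/g}`,
`B = b^{e_d(b)/g}`: the number of solutions of `a^x + b^y = c^z` equals that of
`A^X + B^Y = c^Z`, and `e_d(A) = e_d(B)`. -/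
theorem reduce_to_weak_form (a b c d : ℕ) (ha : 1 < a) (hb : 1 < b) (hc : 1 < c)
    (hab : Nat.gcd a b = 1) (hac : Nat.gcd a c = 1) (hbc : Nat.gcd b c = 1)
    (hdc : d ∣ c) (hd : 2 < d)
    (g A B : ℕ) (hg : g = Nat.gcd (eOrd d a) (eOrd d b))
    (hA : A = a ^ (eOrd d a / g)) (hB : B = b ^ (eOrd d b / g)) :
    Nonempty ({s : ℕ × ℕ × ℕ // IsSol a b c s} ≃ {s : ℕ × ℕ × ℕ // IsSol A B c s}) ∧
    eOrd d A = eOrd d B := by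
  have hd0 : 0 < d := by omega
  haveI : NeZero d := ⟨hd0.ne'⟩
  have had : Nat.Coprime a d := Nat.Coprime.coprime_dvd_right hdc hac
  have hbd : Nat.Coprime b d := Nat.Coprime.coprime_dvd_right hdc hbc
  obtain ⟨hr, hrdvd⟩ := eOrd_spec' hd0 had
  obtain ⟨hs, hsdvd⟩ := eOrd_spec' hd0 hbd
  set r := eOrd d a with hrdef
  set s := eOrd d b with hsdef
  subst hg
  set g := Nat.gcd r s with hgdef
  set r' := r / g with hr'def
  set s' := s / g with hs'def
  subst hA hB
  have gpos : 0 < g := Nat.gcd_pos_of_pos_left s hr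
  have hgr : g ∣ r := Nat.gcd_dvd_left r s
  have hgs : g ∣ s := Nat.gcd_dvd_right r s
  have hr'g : r' * g = r := Nat.div_mul_cancel hgr
  have hs'g : s' * g = s := Nat.div_mul_cancel hgs
  have hr'pos : 0 < r' := Nat.div_pos (Nat.le_of_dvd hr hgr) gpos
  have hs'pos : 0 < s' := Nat.div_pos (Nat.le_of_dvd hs hgs) gpos
  have hco : Nat.Coprime r' s' := Nat.coprime_div_gcd_div_gcd gpos
  -- Part 2 : eOrd d (a ^ r') = g = eOrd d (b ^ s')
  have hAcast : ((a ^ r' : ℕ) : ZMod d) = (a : ZMod d) ^ r' := by push_cast; ring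
  have hBcast : ((b ^ s' : ℕ) : ZMod d) = (b : ZMod d) ^ s' := by push_cast; ring
  have hAord : eOrd d (a ^ r') = g := by
    apply eOrd_eq_of' hd0 gpos
    intro e
    rw [hAcast, ← pow_mul, hrdvd (r' * e), ← hr'g]
    exact Nat.mul_dvd_mul_iff_left hr'pos
  have hBord : eOrd d (b ^ s') = g := by
    apply eOrd_eq_of' hd0 gpos
    intro e
    rw [hBcast, ← pow_mul, hsdvd (s' * e), ← hs'g]
    exact Nat.mul_dvd_mul_iff_left hs'pos
  refine ⟨?_, hAord.trans hBord.symm⟩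
  -- Part 1 : the bijection between solution sets
  have hc0 : (c : ZMod d) = 0 := by
    obtain ⟨k, rfl⟩ := hdc
    push_cast
    simp [ZMod.natCast_self]
  have sol_dvd : ∀ x y z : ℕ, IsSol a b c (x, y, z) → r' ∣ x ∧ s' ∣ y := by
    rintro x y z ⟨hx, hy, hz, heq⟩
    have hcast : (a : ZMod d) ^ x + (b : ZMod d) ^ y = 0 := by
      have h0 := congrArg (Nat.cast : ℕ → ZMod d) heq
      push_cast at h0
      rw [h0, hc0, zero_pow hz.ne']
    have hxy : (a : ZMod d) ^ x = -(b : ZMod d) ^ y := eq_neg_of_add_eq_zero_left hcast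
    have hyx : (b : ZMod d) ^ y = -(a : ZMod d) ^ x := eq_neg_of_add_eq_zero_right hcast
    constructor
    · have h1 : (a : ZMod d) ^ (x * s) = 1 ∨ (a : ZMod d) ^ (x * s) = -1 := by
        rw [pow_mul, hxy, neg_pow, ← pow_mul]
        exact pm_mul' (pm_pow' (Or.inr rfl) s) ((hsdvd (y * s)).mpr (dvd_mul_left s y))
      have h2 : r ∣ x * s := (hrdvd (x * s)).mp h1
      have h3 : r' * g ∣ (x * s') * g := by
        rw [hr'g]
        calc r ∣ x * s := h2
          _ = (x * s') * g := by rw [← hs'g]; ring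
      have h4 : r' ∣ x * s' := (Nat.mul_dvd_mul_iff_right gpos).mp h3
      exact hco.dvd_of_dvd_mul_right h4
    · have h1 : (b : ZMod d) ^ (y * r) = 1 ∨ (b : ZMod d) ^ (y * r) = -1 := by
        rw [pow_mul, hyx, neg_pow, ← pow_mul]
        exact pm_mul' (pm_pow' (Or.inr rfl) r) ((hrdvd (x * r)).mpr (dvd_mul_left r x))
      have h2 : s ∣ y * r := (hsdvd (y * r)).mp h1
      have h3 : s' * g ∣ (y * r') * g := by
        rw [hs'g]
        calc s ∣ y * r := h2
          _ = (y * r') * g := by rw [← hr'g]; ring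
      have h4 : s' ∣ y * r' := (Nat.mul_dvd_mul_iff_right gpos).mp h3
      exact hco.symm.dvd_of_dvd_mul_right h4
  have fwd : ∀ p : {t : ℕ × ℕ × ℕ // IsSol a b c t},
      IsSol (a ^ r') (b ^ s') c (p.1.1 / r', p.1.2.1 / s', p.1.2.2) := by
    rintro ⟨⟨x, y, z⟩, hp⟩
    obtain ⟨hdx, hdy⟩ := sol_dvd x y z hp
    obtain ⟨hx, hy, hz, heq⟩ := hp
    refine ⟨Nat.div_pos (Nat.le_of_dvd hx hdx) hr'pos,
      Nat.div_pos (Nat.le_of_dvd hy hdy) hs'pos, hz, ?_⟩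
    show (a ^ r') ^ (x / r') + (b ^ s') ^ (y / s') = c ^ z
    rw [← pow_mul, ← pow_mul, Nat.mul_div_cancel' hdx, Nat.mul_div_cancel' hdy]
    exact heq
  have bwd : ∀ p : {t : ℕ × ℕ × ℕ // IsSol (a ^ r') (b ^ s') c t},
      IsSol a b c (p.1.1 * r', p.1.2.1 * s', p.1.2.2) := by
    rintro ⟨⟨X, Y, Z⟩, hX, hY, hZ, heq⟩
    refine ⟨Nat.mul_pos hX hr'pos, Nat.mul_pos hY hs'pos, hZ, ?_⟩
    show a ^ (X * r') + b ^ (Y * s') = c ^ Z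
    rw [mul_comm X r', mul_comm Y s', pow_mul, pow_mul]
    exact heq
  exact ⟨{
    toFun := fun p => ⟨_, fwd p⟩
    invFun := fun p => ⟨_, bwd p⟩
    left_inv := by
      rintro ⟨⟨x, y, z⟩, hp⟩
      obtain ⟨hdx, hdy⟩ := sol_dvd x y z hp
      exact Subtype.ext (by simp [Nat.div_mul_cancel hdx, Nat.div_mul_cancel hdy])
    right_inv := by
      rintro ⟨⟨X, Y, Z⟩, hp⟩
      exact Subtype.ext (by simp [Nat.mul_div_cancel _ hr'pos, Nat.mul_div_cancel _ hs'pos]) }⟩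
end

section
/- For every integer c > 1 there exists a constant K (depending only on c) such that: for all integers a, b greater than 1 with a, b, c pairwise relatively prime and max{a, b} > K, every solution (x, y, z) in positive integers of the equation a^x + b^y = c^z satisfies gcd(x, y, c) = 1. -/
open Finset

private lemma bern (m : ℕ) : ∀ z : ℕ, m ^ (z + 1) + (z + 1) * m ^ z ≤ (m + 1) ^ (z + 1) := by
  intro z
  induction z with
  | zero => simp [pow_succ]
  | succ n ih =>
    calc m ^ (n + 2) + (n + 2) * m ^ (n + 1)
        ≤ (m ^ (n + 1) + (n + 1) * m ^ n) * (m + 1) := by ring_nf; nlinarith [Nat.zero_le ((n+1) * m ^ n), Nat.zero_le (m ^ n)]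
      _ ≤ (m + 1) ^ (n + 1) * (m + 1) := Nat.mul_le_mul_right _ ih
      _ = (m + 1) ^ (n + 2) := by ring

private lemma pow_add_pow_lt {X Y p : ℕ} (hX : 0 < X) (hY : 0 < Y) (hp : 2 ≤ p) :
    X ^ p + Y ^ p < (X + Y) ^ p := by
  have h1 : p - 1 ≠ 0 := by omega
  have hXs : X ^ (p - 1) < (X + Y) ^ (p - 1) := Nat.pow_lt_pow_left (by omega) h1
  have hYs : Y ^ (p - 1) < (X + Y) ^ (p - 1) := Nat.pow_lt_pow_left (by omega) h1
  have hps : p - 1 + 1 = p := by omega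
  calc X ^ p + Y ^ p = X * X ^ (p - 1) + Y * Y ^ (p - 1) := by
        rw [← pow_succ', ← pow_succ', hps]
    _ < X * (X + Y) ^ (p - 1) + Y * (X + Y) ^ (p - 1) :=
        Nat.add_lt_add ((Nat.mul_lt_mul_left hX).2 hXs) ((Nat.mul_lt_mul_left hY).2 hYs)
    _ = (X + Y) ^ p := by rw [← add_mul, ← pow_succ', hps]

/-- For every `c > 1` there is a constant `K` (depending only on `c`) such that
for all `a, b > 1` pairwise coprime with `c` and `max a b > K`, every solution `(x, y, z)` in
positive integers of `a^x + b^y = c^z` satisfies `gcd(x, y, c) = 1`. -/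
theorem gcd_xyc_eq_one (c : ℕ) (hc : 1 < c) :
    ∃ K : ℕ, ∀ a b : ℕ, 1 < a → 1 < b →
      Nat.gcd a b = 1 → Nat.gcd a c = 1 → Nat.gcd b c = 1 →
      K < max a b →
      ∀ x y z : ℕ, 0 < x → 0 < y → 0 < z → a ^ x + b ^ y = c ^ z →
        Nat.gcd x (Nat.gcd y c) = 1 := by
  classical
  have hc0 : 0 < c := by omega
  set N := (2 * c) ^ c * c ^ c with hN
  have hN1 : 1 ≤ N := Nat.one_le_iff_ne_zero.mpr (by positivity)
  refine ⟨c ^ N, ?_⟩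
  intro a b ha hb hab hac hbc hK x y z hx hy hz heq
  by_contra hg
  obtain ⟨p, hp, hpd⟩ := Nat.exists_prime_and_dvd hg
  have hpx : p ∣ x := hpd.trans (Nat.gcd_dvd_left _ _)
  have hpy : p ∣ y := (hpd.trans (Nat.gcd_dvd_right _ _)).trans (Nat.gcd_dvd_left _ _)
  have hpc : p ∣ c := (hpd.trans (Nat.gcd_dvd_right _ _)).trans (Nat.gcd_dvd_right _ _)
  have hpa : ¬ p ∣ a := by
    intro h
    exact hp.ne_one (Nat.eq_one_of_dvd_one (hac ▸ Nat.dvd_gcd h hpc))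
  have hpb : ¬ p ∣ b := by
    intro h
    exact hp.ne_one (Nat.eq_one_of_dvd_one (hbc ▸ Nat.dvd_gcd h hpc))
  obtain ⟨u, hu⟩ := hpx
  obtain ⟨v, hv⟩ := hpy
  have hu0 : 0 < u := by
    rcases Nat.eq_zero_or_pos u with h | h
    · subst h; simp at hu; omega
    · exact h
  have hv0 : 0 < v := by
    rcases Nat.eq_zero_or_pos v with h | h
    · subst h; simp at hv; omega
    · exact h
  set X := a ^ u with hX
  set Y := b ^ v with hYdef
  have hXeq : a ^ x = X ^ p := by rw [hu, mul_comm, pow_mul]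
  have hYeq : b ^ y = Y ^ p := by rw [hv, mul_comm, pow_mul]
  have heqXY : X ^ p + Y ^ p = c ^ z := by rw [← hXeq, ← hYeq]; exact heq
  have haX : a ≤ X := Nat.le_self_pow hu0.ne' a
  have hbY : b ≤ Y := Nat.le_self_pow hv0.ne' b
  have hX0 : 0 < X := by omega
  have hY0 : 0 < Y := by omega
  -- final contradiction helper: if z ≤ N then done
  have final : ¬ z ≤ N := by
    intro hzN
    have h1 : a ≤ c ^ z := le_trans (Nat.le_self_pow hx.ne' a) (heq ▸ Nat.le_add_right _ _)
    have h2 : b ≤ c ^ z := le_trans (Nat.le_self_pow hy.ne' b) (heq ▸ Nat.le_add_left _ _)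
    have h3 : c ^ z ≤ c ^ N := Nat.pow_le_pow_right hc0 hzN
    have := max_le (le_trans h1 h3) (le_trans h2 h3)
    omega
  rcases eq_or_ne p 2 with hp2 | hp2
  · -- p = 2
    subst hp2
    have hXodd : Odd X := (Nat.odd_iff.mpr (Nat.two_dvd_ne_zero.mp hpa)).pow
    have hYodd : Odd Y := (Nat.odd_iff.mpr (Nat.two_dvd_ne_zero.mp hpb)).pow
    obtain ⟨s, hs⟩ := hXodd
    obtain ⟨t, ht⟩ := hYodd
    have hX4 : X ^ 2 % 4 = 1 := by
      have : X ^ 2 = 4 * (s * s + s) + 1 := by rw [hs]; ring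
      omega
    have hY4 : Y ^ 2 % 4 = 1 := by
      have : Y ^ 2 = 4 * (t * t + t) + 1 := by rw [ht]; ring
      omega
    have hcz4 : c ^ z % 4 = 2 := by rw [← heqXY]; omega
    have hz1 : z = 1 := by
      by_contra hz1
      have hz2 : 2 ≤ z := by omega
      obtain ⟨k, hk⟩ := hpc
      have : 4 ∣ c ^ z := by
        have : c ^ 2 ∣ c ^ z := Nat.pow_dvd_pow c hz2
        refine dvd_trans ?_ this
        rw [hk]; exact ⟨k * k, by ring⟩
      omega
    exact final (by omega)
  · -- p odd
    haveI : Fact p.Prime := ⟨hp⟩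
    have hpodd : Odd p := hp.odd_of_ne_two hp2
    have hp3 : 3 ≤ p := by have := hp.two_le; omega
    set s := X + Y with hsdef
    have hs0 : 0 < s := by omega
    set G : ℤ := ∑ i ∈ range p, (X : ℤ) ^ i * (-(Y : ℤ)) ^ (p - 1 - i) with hGdef
    have hGid : G * ((X : ℤ) + Y) = (X : ℤ) ^ p + (Y : ℤ) ^ p := by
      have h := geom_sum₂_mul (X : ℤ) (-(Y : ℤ)) p
      rw [sub_neg_eq_add, hpodd.neg_pow, sub_neg_eq_add] at h
      exact h
    have hGs : G * ((X : ℤ) + Y) = (c : ℤ) ^ z := by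
      rw [hGid]; exact_mod_cast congrArg (Nat.cast : ℕ → ℤ) heqXY
    have hGpos : 0 < G := by
      nlinarith [hGs, pow_pos (show (0 : ℤ) < c by exact_mod_cast hc0) z,
        show (0 : ℤ) < (X : ℤ) + Y by positivity]
    obtain ⟨T, hT⟩ : ∃ T : ℕ, (T : ℤ) = G := ⟨G.toNat, Int.toNat_of_nonneg hGpos.le⟩
    have hsT : s * T = c ^ z := by
      have h2 : ((X : ℤ) + Y) * T = (c : ℤ) ^ z := by rw [hT, mul_comm]; exact hGs
      exact_mod_cast h2
    have hT0 : 0 < T := by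
      rcases Nat.eq_zero_or_pos T with h | h
      · rw [h, mul_zero] at hsT
        exact absurd hsT.symm (pow_pos hc0 z).ne'
      · exact h
    have hpXY : p ∣ X + Y := by
      have h0 : ((X + Y : ℕ) : ZMod p) = 0 := by
        push_cast
        have hXp : (X : ZMod p) ^ p = X := ZMod.pow_card _
        have hYp : (Y : ZMod p) ^ p = Y := ZMod.pow_card _
        have hcz : ((c : ZMod p)) = 0 := (ZMod.natCast_eq_zero_iff c p).mpr hpc
        have he : (X : ZMod p) ^ p + (Y : ZMod p) ^ p = ((c : ZMod p)) ^ z := by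
          exact_mod_cast congrArg (Nat.cast : ℕ → ZMod p) heqXY
        rw [hXp, hYp] at he
        rw [he, hcz, zero_pow hz.ne']
      exact (ZMod.natCast_eq_zero_iff _ p).mp h0
    have hpX : ¬ p ∣ X := fun h => hpa (hp.dvd_of_dvd_pow h)
    have hlte : padicValNat p (X ^ p + Y ^ p) = padicValNat p (X + Y) + 1 := by
      rw [padicValNat.pow_add_pow hpodd hpXY hpX hpodd, padicValNat.self hp.one_lt]
    have hfp : z * c.factorization p = s.factorization p + 1 := by
      have h1 := hlte
      rw [heqXY] at h1
      have h2 : (c ^ z).factorization p = (X + Y).factorization p + 1 := by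
        rw [Nat.factorization_def _ hp, Nat.factorization_def _ hp]
        exact h1
      rw [Nat.factorization_pow] at h2
      simp only [Finsupp.smul_apply, smul_eq_mul] at h2
      rw [hsdef]
      exact h2
    have hC : ∀ q : ℕ, q.Prime → q ≠ p → q ∣ s → s.factorization q = z * c.factorization q := by
      intro q hq hqp hqs
      haveI : Fact q.Prime := ⟨hq⟩
      have hqc : q ∣ c := hq.dvd_of_dvd_pow (hqs.trans ⟨T, hsT.symm⟩)
      have hqT : ¬ q ∣ T := by
        intro hqT
        have hqa : ¬ q ∣ a := fun h => hq.ne_one (Nat.eq_one_of_dvd_one (hac ▸ Nat.dvd_gcd h hqc))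
        have hXq : (X : ZMod q) ≠ 0 := by
          rw [Ne, ZMod.natCast_eq_zero_iff]
          exact fun h => hqa (hq.dvd_of_dvd_pow h)
        have hYX : (-(Y : ZMod q)) = (X : ZMod q) := by
          have h0 : ((X + Y : ℕ) : ZMod q) = 0 := (ZMod.natCast_eq_zero_iff _ q).mpr hqs
          push_cast at h0
          linear_combination -h0
        have hTq : (T : ZMod q) = 0 := (ZMod.natCast_eq_zero_iff _ q).mpr hqT
        have hTG : (0 : ZMod q) = (p : ZMod q) * (X : ZMod q) ^ (p - 1) := by
          have h1 : ((T : ℤ) : ZMod q) = ((G : ℤ) : ZMod q) := by rw [hT]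
          rw [hGdef] at h1
          push_cast at h1
          rw [hTq] at h1
          rw [h1]
          have hterm : ∀ i ∈ range p,
              (X : ZMod q) ^ i * (-(Y : ZMod q)) ^ (p - 1 - i) = (X : ZMod q) ^ (p - 1) := by
            intro i hi
            rw [hYX, ← pow_add]
            congr 1
            have := mem_range.mp hi
            omega
          rw [Finset.sum_congr rfl hterm, Finset.sum_const, card_range, nsmul_eq_mul]
        rcases mul_eq_zero.mp hTG.symm with h | h
        · exact hqp ((Nat.prime_dvd_prime_iff_eq hq hp).mp
            ((ZMod.natCast_eq_zero_iff p q).mp h))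
        · have hX0' : (X : ZMod q) ^ (p - 1) = 0 := h
          exact hXq ((pow_eq_zero_iff (show p - 1 ≠ 0 by omega)).mp hX0')
      have h2 : (s * T).factorization q = (c ^ z).factorization q := by rw [hsT]
      rw [Nat.factorization_mul hs0.ne' hT0.ne', Nat.factorization_pow] at h2
      simp only [Finsupp.coe_add, Pi.add_apply, Finsupp.smul_apply, smul_eq_mul] at h2
      rw [Nat.factorization_eq_zero_of_not_dvd hqT] at h2
      omega
    set F := (s * p).primeFactors with hFdef
    have hsp0 : s * p ≠ 0 := by positivity
    have hFsub : F ⊆ c.primeFactors := by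
      intro q hqF
      obtain ⟨hq, hqdvd, -⟩ := Nat.mem_primeFactors.mp hqF
      refine Nat.mem_primeFactors.mpr ⟨hq, ?_, hc0.ne'⟩
      rcases (Nat.Prime.dvd_mul hq).mp hqdvd with h | h
      · exact hq.dvd_of_dvd_pow (h.trans ⟨T, hsT.symm⟩)
      · exact (Nat.prime_dvd_prime_iff_eq hq hp).mp h ▸ hpc
    set d := ∏ q ∈ F, q ^ c.factorization q with hddef
    have hd0 : d ≠ 0 := by
      rw [hddef]
      exact Finset.prod_ne_zero_iff.mpr fun q hqF =>
        pow_ne_zero _ (Nat.prime_of_mem_primeFactors (hFsub hqF)).pos.ne'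
    have hprodc : ∏ q ∈ c.primeFactors, q ^ c.factorization q = c := by
      simpa [Finsupp.prod] using Nat.factorization_prod_pow_eq_self hc0.ne'
    have hddvd : d ∣ c := by
      have h1 : d ∣ ∏ q ∈ c.primeFactors, q ^ c.factorization q :=
        Finset.prod_dvd_prod_of_subset _ _ _ hFsub
      rwa [hprodc] at h1
    have hdfact : ∀ r : ℕ, d.factorization r = if r ∈ F then c.factorization r else 0 := by
      intro r
      rw [hddef, Nat.factorization_prod
        (fun q hqF => pow_ne_zero _ (Nat.prime_of_mem_primeFactors (hFsub hqF)).pos.ne')]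
      rw [Finset.sum_congr rfl (fun q hqF =>
        (Nat.prime_of_mem_primeFactors (hFsub hqF)).factorization_pow)]
      rw [Finsupp.finset_sum_apply]
      simp only [Finsupp.single_apply]
      exact Finset.sum_ite_eq' F r _
    have hspd : s * p = d ^ z := by
      refine Nat.eq_of_factorization_eq hsp0 (pow_ne_zero z hd0) ?_
      intro r
      rw [Nat.factorization_pow]
      simp only [Finsupp.smul_apply, smul_eq_mul]
      rw [hdfact r]
      by_cases hr : r.Prime
      · rw [Nat.factorization_mul hs0.ne' hp.pos.ne']
        simp only [Finsupp.coe_add, Pi.add_apply]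
        rcases eq_or_ne r p with rfl | hrp
        · have hrF : r ∈ F := Nat.mem_primeFactors.mpr ⟨hr, ⟨s, mul_comm s r⟩, hsp0⟩
          rw [if_pos hrF, hr.factorization, Finsupp.single_apply, if_pos rfl]
          exact hfp.symm
        · have hpr : (p.factorization) r = 0 := by
            rw [hp.factorization, Finsupp.single_apply, if_neg (Ne.symm hrp)]
          rw [hpr, add_zero]
          by_cases hrs : r ∣ s
          · have hrF : r ∈ F := Nat.mem_primeFactors.mpr ⟨hr, hrs.mul_right p, hsp0⟩
            rw [if_pos hrF]
            exact hC r hr hrp hrs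
          · have hs0' : s.factorization r = 0 := Nat.factorization_eq_zero_of_not_dvd hrs
            have hrF : r ∉ F := by
              intro hmem
              obtain ⟨-, hdvd, -⟩ := Nat.mem_primeFactors.mp hmem
              rcases (Nat.Prime.dvd_mul hr).mp hdvd with h | h
              · exact hrs h
              · exact hrp ((Nat.prime_dvd_prime_iff_eq hr hp).mp h)
            rw [if_neg hrF, hs0', mul_zero]
      · rw [Nat.factorization_eq_zero_of_not_prime _ hr]
        rw [Nat.factorization_eq_zero_of_not_prime _ hr]
        simp
    set e := c / d with hedef
    have hce : c = d * e := (Nat.mul_div_cancel' hddvd).symm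
    have he0 : 0 < e := by
      rcases Nat.eq_zero_or_pos e with h | h
      · rw [h, mul_zero] at hce; omega
      · exact h
    have hTpe : T = p * e ^ z := by
      have h1 : d ^ z * T = d ^ z * (p * e ^ z) := by
        calc d ^ z * T = (s * p) * T := by rw [hspd]
          _ = p * (s * T) := by ring
          _ = p * c ^ z := by rw [hsT]
          _ = p * (d * e) ^ z := by rw [← hce]
          _ = d ^ z * (p * e ^ z) := by ring
      exact Nat.eq_of_mul_eq_mul_left (pow_pos (Nat.pos_of_ne_zero hd0) z) h1
    have hpdvdd : p ∣ d := by
      have hpF : p ∈ F := Nat.mem_primeFactors.mpr ⟨hp, ⟨s, mul_comm s p⟩, hsp0⟩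
      have h1 : p ^ c.factorization p ∣ d := hddef ▸ Finset.dvd_prod_of_mem _ hpF
      exact dvd_trans (dvd_pow_self p (hp.factorization_pos_of_dvd hc0.ne' hpc).ne') h1
    have hd3 : 3 ≤ d := le_trans hp3 (Nat.le_of_dvd (Nat.pos_of_ne_zero hd0) hpdvdd)
    have hpm1 : p - 1 + 1 = p := by omega
    have hczlt : c ^ z < s ^ p := by
      rw [← heqXY]; exact pow_add_pow_lt hX0 hY0 (by omega)
    have hsp_split : s ^ p = s * s ^ (p - 1) := by
      conv_lhs => rw [← hpm1]
      rw [pow_succ']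
    have hTlt : T < s ^ (p - 1) := by
      have h1 : s * T < s * s ^ (p - 1) := by
        rw [← hsp_split, hsT]; exact hczlt
      exact Nat.lt_of_mul_lt_mul_left h1
    set M := d ^ (p - 1) with hMdef
    have hM9 : 9 ≤ M := by
      calc 9 = 3 ^ 2 := rfl
        _ ≤ d ^ 2 := Nat.pow_le_pow_left hd3 2
        _ ≤ d ^ (p - 1) := Nat.pow_le_pow_right (by omega) (by omega)
    have hMz : p ^ (p - 1) * s ^ (p - 1) = M ^ z := by
      rw [← mul_pow, mul_comm p s, hspd, hMdef, ← pow_mul, ← pow_mul, mul_comm z (p - 1)]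
    have hupper : e ^ z < M ^ z := by
      have h1 : p ^ (p - 1) * T < p ^ (p - 1) * s ^ (p - 1) :=
        (Nat.mul_lt_mul_left (pow_pos hp.pos _)).2 hTlt
      have h3 : e ^ z ≤ p ^ (p - 1) * T := by
        rw [hTpe]
        calc e ^ z ≤ p * e ^ z := Nat.le_mul_of_pos_left _ hp.pos
          _ ≤ p ^ (p - 1) * (p * e ^ z) := Nat.le_mul_of_pos_left _ (pow_pos hp.pos _)
      omega
    have heM : e ≤ M - 1 := by
      have : e < M := by
        by_contra h
        push_neg at h
        exact absurd (Nat.pow_le_pow_left h z) (by omega)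
      omega
    have hlower : M ^ z ≤ (2 * p) ^ p * e ^ z := by
      have h1 : s ^ p ≤ 2 ^ (p - 1) * (X ^ p + Y ^ p) := add_pow_le (Nat.zero_le X) (Nat.zero_le Y) p
      rw [heqXY, ← hsT] at h1
      have h2 : s * s ^ (p - 1) ≤ s * (2 ^ (p - 1) * T) := by
        rw [← hsp_split]
        calc s ^ p ≤ 2 ^ (p - 1) * (s * T) := h1
          _ = s * (2 ^ (p - 1) * T) := by ring
      have h3 : s ^ (p - 1) ≤ 2 ^ (p - 1) * T := Nat.le_of_mul_le_mul_left h2 hs0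
      calc M ^ z = p ^ (p - 1) * s ^ (p - 1) := hMz.symm
        _ ≤ p ^ (p - 1) * (2 ^ (p - 1) * T) := Nat.mul_le_mul_left _ h3
        _ = (2 * p) ^ (p - 1) * T := by rw [mul_pow]; ring
        _ = (2 * p) ^ (p - 1) * (p * e ^ z) := by rw [hTpe]
        _ ≤ (2 * p) ^ (p - 1) * ((2 * p) * e ^ z) :=
            Nat.mul_le_mul_left _ (Nat.mul_le_mul_right _ (by omega))
        _ = (2 * p) ^ p * e ^ z := by rw [← mul_assoc, ← pow_succ, hpm1]
    set m := M - 1 with hmdef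
    have hm1 : 1 ≤ m := by omega
    have hmM : m + 1 = M := by omega
    obtain ⟨z', rfl⟩ : ∃ z', z = z' + 1 := ⟨z - 1, by omega⟩
    have hbern : m ^ (z' + 1) + (z' + 1) * m ^ z' ≤ M ^ (z' + 1) := by
      rw [← hmM]; exact bern m z'
    have hez : e ^ (z' + 1) ≤ m ^ (z' + 1) := Nat.pow_le_pow_left heM _
    have hmez : m ^ (z' + 1) + (z' + 1) * m ^ z' ≤ (2 * p) ^ p * m ^ (z' + 1) :=
      le_trans hbern (le_trans hlower (Nat.mul_le_mul_left _ hez))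
    have hz'le : z' + 1 ≤ (2 * p) ^ p * m := by
      have h5 : m ^ z' * (m + (z' + 1)) ≤ m ^ z' * ((2 * p) ^ p * m) := by
        calc m ^ z' * (m + (z' + 1)) = m ^ (z' + 1) + (z' + 1) * m ^ z' := by ring
          _ ≤ (2 * p) ^ p * m ^ (z' + 1) := hmez
          _ = m ^ z' * ((2 * p) ^ p * m) := by ring
      have := Nat.le_of_mul_le_mul_left h5 (pow_pos (by omega) z')
      omega
    apply final
    have hpc' : p ≤ c := Nat.le_of_dvd hc0 hpc
    have hdc : d ≤ c := Nat.le_of_dvd hc0 hddvd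
    have h2p : (2 * p) ^ p ≤ (2 * c) ^ c :=
      le_trans (Nat.pow_le_pow_left (by omega) p) (Nat.pow_le_pow_right (by omega) hpc')
    have hmc : m ≤ c ^ c := by
      have hMc : M ≤ c ^ c :=
        le_trans (Nat.pow_le_pow_left hdc _) (Nat.pow_le_pow_right hc0 (by omega))
      omega
    calc z' + 1 ≤ (2 * p) ^ p * m := hz'le
      _ ≤ (2 * c) ^ c * c ^ c := Nat.mul_le_mul h2p hmc
end

section
/- Let a, b, c be pairwise relatively prime integers all greater than 1. Let c₁ be a divisor of c with c₁ > 2 and gcd(c₁, φ(c₁)) = 1, and assume e_{c₁}(a) = e_{c₁}(b); write E₁ for this common value, and let δ_a, δ_b ∈ {1, −1} be the unique signs with a^{E₁} ≡ δ_a (mod c₁) and b^{E₁} ≡ δ_b (mod c₁). Suppose (x, y, z) and (X, Y, Z) are two distinct solutions in positive integers of a^x + b^y = c^z with z ≤ Z, and set Δ = |xY − Xy|. Then: (i) a^Δ ≡ (−1)^{y+Y} (mod c^z) and b^Δ ≡ (−1)^{x+X} (mod c^z); (ii) E₁ divides Δ; (iii) c₁^z divides gcd(a^{E₁} − δ_a,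 b^{E₁} − δ_b) · (Δ/E₁). -/
private lemma cancel_unit' {R : Type*} [CommMonoid R] {u : R} (hu : IsUnit u) {m n : ℕ} {w : R}
    (hmn : n ≤ m) (h : u ^ m = u ^ n * w) : u ^ (m - n) = w := by
  have h2 : u ^ n * u ^ (m - n) = u ^ n * w := by
    rw [← pow_add, Nat.add_sub_cancel' hmn, h]
  exact (hu.pow n).mul_left_cancel h2

private lemma part_one' (a b c : ℕ) (x y z X Y Z Δ : ℕ) (hc : 0 < c)
    (hcop : Nat.Coprime a (c ^ z)) (hzZ : z ≤ Z)
    (h1 : a ^ x + b ^ y = c ^ z) (h2 : a ^ X + b ^ Y = c ^ Z)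
    (hΔ : (Δ : ℤ) = |(x : ℤ) * (Y : ℤ) - (X : ℤ) * (y : ℤ)|) :
    (c : ℤ) ^ z ∣ (a : ℤ) ^ Δ - (-1) ^ (y + Y) := by
  set R := ZMod (c ^ z) with hR
  have hcz : (0:ℕ) < c ^ z := pow_pos hc z
  haveI : NeZero (c ^ z) := ⟨hcz.ne'⟩
  have hc0 : ((c : R)) ^ z = 0 := by
    have : ((c ^ z : ℕ) : R) = 0 := by
      rw [ZMod.natCast_eq_zero_iff]
    push_cast at this
    exact this
  have hcZ0 : ((c : R)) ^ Z = 0 := by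
    rw [← Nat.add_sub_cancel' hzZ, pow_add, hc0, zero_mul]
  have e1 : (a : R) ^ x = -(b : R) ^ y := by
    have := congrArg (fun n : ℕ => (n : R)) h1
    push_cast at this
    rw [hc0] at this
    linear_combination this
  have e2 : (a : R) ^ X = -(b : R) ^ Y := by
    have := congrArg (fun n : ℕ => (n : R)) h2
    push_cast at this
    rw [hcZ0] at this
    linear_combination this
  have key : (a : R) ^ (x * Y) = (a : R) ^ (X * y) * (-1) ^ (y + Y) := by
    have k1 : (a : R) ^ (x * Y) = (-1) ^ Y * (b : R) ^ (y * Y) := by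
      rw [pow_mul, e1, neg_pow, ← pow_mul]
    have k2 : (a : R) ^ (X * y) = (-1) ^ y * (b : R) ^ (y * Y) := by
      rw [pow_mul, e2, neg_pow, ← pow_mul, mul_comm Y y]
    have hpow : (-1 : R) ^ y * (-1) ^ (y + Y) = (-1) ^ Y := by
      rw [← pow_add, show y + (y + Y) = 2 * y + Y by ring, pow_add, pow_mul, neg_one_sq,
        one_pow, one_mul]
    rw [k1, k2, mul_right_comm, hpow]
  have hu : IsUnit (a : R) := (ZMod.isUnit_iff_coprime a (c ^ z)).mpr hcop
  have hAΔ : (a : R) ^ Δ = (-1) ^ (y + Y) := by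
    rcases le_total (X * y) (x * Y) with hle | hle
    · have hΔeq : Δ = x * Y - X * y := by
        have : (Δ : ℤ) = ((x * Y - X * y : ℕ) : ℤ) := by
          rw [hΔ, abs_of_nonneg (by push_cast; nlinarith [hle] : (0:ℤ) ≤ (x:ℤ) * Y - X * y)]
          push_cast [hle]
          ring
        exact_mod_cast this
      rw [hΔeq]
      exact cancel_unit' hu hle key
    · have hΔeq : Δ = X * y - x * Y := by
        have : (Δ : ℤ) = ((X * y - x * Y : ℕ) : ℤ) := by
          rw [hΔ, abs_of_nonpos (by push_cast; nlinarith [hle] : (x:ℤ) * Y - X * y ≤ 0)]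
          push_cast [hle]
          ring
        exact_mod_cast this
      have key2 : (a : R) ^ (X * y) = (a : R) ^ (x * Y) * (-1) ^ (y + Y) := by
        have h4 : (-1 : R) ^ (y + Y) * (-1) ^ (y + Y) = 1 := by
          rw [← pow_add]
          exact Even.neg_one_pow ⟨y + Y, by ring⟩
        rw [key, mul_assoc, h4, mul_one]
      rw [hΔeq]
      exact cancel_unit' hu hle key2
  have : (((a : ℤ) ^ Δ - (-1) ^ (y + Y) : ℤ) : R) = 0 := by
    push_cast
    rw [hAΔ]
    ring
  rw [ZMod.intCast_zmod_eq_zero_iff_dvd] at this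
  exact_mod_cast this

private lemma signPow' {t : ℤ} (ht : t = 1 ∨ t = -1) (q : ℕ) : t ^ q = 1 ∨ t ^ q = -1 := by
  rcases ht with rfl | rfl
  · left; exact one_pow q
  · rcases Nat.even_or_odd q with h | h
    · left; exact h.neg_one_pow
    · right; exact h.neg_one_pow

private lemma signMul' {s t : ℤ} (hs : s = 1 ∨ s = -1) (ht : t = 1 ∨ t = -1) :
    s * t = 1 ∨ s * t = -1 := by
  rcases hs with rfl | rfl <;> rcases ht with rfl | rfl <;> simp

private lemma zmod_dvd_iff' (M : ℕ) (w : ℤ) : (M : ℤ) ∣ w ↔ ((w : ZMod M) = 0) :=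
  (ZMod.intCast_zmod_eq_zero_iff_dvd w M).symm

private lemma eOrd_pos_and_dvd' (c₁ A : ℕ) (hcop : Nat.Coprime A c₁) (hc₁ : 0 < c₁)
    (E : ℕ) (hE : eOrd c₁ A = E) (δ : ℤ) (hδ : δ = 1 ∨ δ = -1)
    (hd : (c₁ : ℤ) ∣ (A : ℤ) ^ E - δ) :
    0 < E ∧ ∀ n : ℕ, ((c₁ : ℤ) ∣ (A : ℤ) ^ n - 1 ∨ (c₁ : ℤ) ∣ (A : ℤ) ^ n + 1) → E ∣ n := by
  set S := {e : ℕ | 0 < e ∧ ((c₁ : ℤ) ∣ (A : ℤ) ^ e - 1 ∨ (c₁ : ℤ) ∣ (A : ℤ) ^ e + 1)} with hS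
  have hne : S.Nonempty := by
    refine ⟨Nat.totient c₁, Nat.totient_pos.mpr hc₁, Or.inl ?_⟩
    have h0 := (Nat.modEq_iff_dvd (n := c₁)).mp (Nat.ModEq.pow_totient hcop)
    have h2 := dvd_neg.mpr h0
    rw [neg_sub] at h2
    push_cast at h2 ⊢
    convert h2 using 2
  have hmem : E ∈ S := by rw [← hE]; exact Nat.sInf_mem hne
  obtain ⟨hEpos, _⟩ := hmem
  refine ⟨hEpos, fun n hn => ?_⟩
  have huE : ((A : ZMod c₁)) ^ E = ((δ : ℤ) : ZMod c₁) := by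
    have := (zmod_dvd_iff' c₁ _).mp hd
    push_cast at this
    linear_combination this
  set q := n / E with hq
  set r := n % E with hr
  have hnqr : E * q + r = n := Nat.div_add_mod n E
  obtain ⟨ε, hε, hnε⟩ : ∃ ε : ℤ, (ε = 1 ∨ ε = -1) ∧ (c₁ : ℤ) ∣ (A : ℤ) ^ n - ε := by
    rcases hn with h | h
    · exact ⟨1, Or.inl rfl, h⟩
    · exact ⟨-1, Or.inr rfl, by rw [sub_neg_eq_add]; exact h⟩
  have hur : ((A : ZMod c₁)) ^ r = (((δ ^ q * ε : ℤ)) : ZMod c₁) := by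
    have hun : ((A : ZMod c₁)) ^ n = ((ε : ℤ) : ZMod c₁) := by
      have := (zmod_dvd_iff' c₁ _).mp hnε
      push_cast at this
      linear_combination this
    have hsq : ((δ : ℤ) : ZMod c₁) * ((δ : ℤ) : ZMod c₁) = 1 := by
      rcases hδ with rfl | rfl <;> push_cast <;> ring
    have expand : ((A : ZMod c₁)) ^ n = (((δ : ℤ)) : ZMod c₁) ^ q * ((A : ZMod c₁)) ^ r := by
      rw [← hnqr, pow_add, pow_mul, huE]
    have heq : (((δ : ℤ)) : ZMod c₁) ^ q * ((A : ZMod c₁)) ^ r = ((ε : ℤ) : ZMod c₁) := by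
      rw [← expand, hun]
    calc ((A : ZMod c₁)) ^ r
        = ((((δ : ℤ)) : ZMod c₁) * (((δ : ℤ)) : ZMod c₁)) ^ q * ((A : ZMod c₁)) ^ r := by
          rw [hsq, one_pow, one_mul]
      _ = (((δ : ℤ)) : ZMod c₁) ^ q * ((((δ : ℤ)) : ZMod c₁) ^ q * ((A : ZMod c₁)) ^ r) := by
          rw [mul_pow]; ring
      _ = (((δ : ℤ)) : ZMod c₁) ^ q * ((ε : ℤ) : ZMod c₁) := by rw [heq]
      _ = (((δ ^ q * ε : ℤ)) : ZMod c₁) := by push_cast; ring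
  have hrd : (c₁ : ℤ) ∣ (A : ℤ) ^ r - δ ^ q * ε := by
    rw [zmod_dvd_iff']
    push_cast
    push_cast at hur
    linear_combination hur
  have hrzero : r = 0 := by
    by_contra hr0
    have hrS : r ∈ S := by
      refine ⟨Nat.pos_of_ne_zero hr0, ?_⟩
      rcases signMul' (signPow' hδ q) hε with h | h
      · left; rwa [h] at hrd
      · right; rw [h] at hrd; rwa [sub_neg_eq_add] at hrd
    have hle : eOrd c₁ A ≤ r := Nat.sInf_le hrS
    rw [hE] at hle
    have hlt : r < E := Nat.mod_lt n hEpos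
    omega
  exact Nat.dvd_of_mod_eq_zero hrzero

private lemma lte_bound' {p : ℕ} (hp : p.Prime) (hp2 : p ≠ 2) {A δ ε : ℤ} (hA : 1 < A)
    (hδ : δ = 1 ∨ δ = -1) (hε : ε = 1 ∨ ε = -1)
    {k z : ℕ} (hk : 0 < k) (hzpos : 0 < z) (hpa : ¬ (p : ℤ) ∣ A) (hdvd : (p : ℤ) ∣ A - δ)
    (hz : (p : ℤ) ^ z ∣ A ^ k - ε) :
    z ≤ multiplicity ((p : ℤ)) (A - δ) + multiplicity p k := by
  have hodd : Odd p := hp.odd_of_ne_two hp2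
  have hpd1 : (p : ℤ) ∣ A ^ k - δ ^ k := hdvd.trans (sub_dvd_pow_sub_pow A δ k)
  have hpd2 : (p : ℤ) ∣ A ^ k - ε := (dvd_pow_self ((p:ℤ)) hzpos.ne').trans hz
  have hpd : (p : ℤ) ∣ ε - δ ^ k := by
    have := dvd_sub hpd1 hpd2
    simpa using this
  have hδk : δ ^ k = 1 ∨ δ ^ k = -1 := by
    rcases hδ with rfl | rfl
    · left; exact one_pow k
    · rcases Nat.even_or_odd k with h | h
      · left; exact h.neg_one_pow
      · right; exact h.neg_one_pow
  have hεδ : ε = δ ^ k := by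
    by_contra hne
    have h2 : (p : ℤ) ∣ 2 ∨ (p : ℤ) ∣ (-2) := by
      rcases hε with rfl | rfl <;> rcases hδk with h | h <;> rw [h] at hpd hne <;>
        simp at hpd hne ⊢ <;> tauto
    have hp2' : (p : ℤ) ∣ 2 := by rcases h2 with h | h; exact h; exact (dvd_neg.mp h)
    have hpn : p ∣ 2 := by exact_mod_cast hp2'
    have := (Nat.prime_dvd_prime_iff_eq hp Nat.prime_two).mp hpn
    exact hp2 this
  rw [hεδ] at hz
  have hfinA : FiniteMultiplicity ((p : ℤ)) (A - δ) := by
    rw [Int.finiteMultiplicity_iff]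
    constructor
    · simpa using hp.ne_one
    · rcases hδ with rfl | rfl <;> omega
  have hfink : FiniteMultiplicity p k := Nat.finiteMultiplicity_iff.mpr ⟨hp.ne_one, hk⟩
  have hle : (z : ℕ∞) ≤ emultiplicity ((p : ℤ)) (A ^ k - δ ^ k) :=
    le_emultiplicity_of_pow_dvd hz
  rw [Int.emultiplicity_pow_sub_pow hp hodd hdvd hpa k,
    hfinA.emultiplicity_eq_multiplicity, hfink.emultiplicity_eq_multiplicity] at hle
  exact_mod_cast hle

private lemma per_prime' {p z k : ℕ} (hp : p.Prime) (hp2 : p ≠ 2) (hk : 0 < k) (hz : 0 < z)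
    {A B δ δ' ε ε' : ℤ} (hA : 1 < A) (hB : 1 < B)
    (hδ : δ = 1 ∨ δ = -1) (hδ' : δ' = 1 ∨ δ' = -1) (hε : ε = 1 ∨ ε = -1)
    (hε' : ε' = 1 ∨ ε' = -1)
    (hpa : ¬ (p : ℤ) ∣ A) (hpb : ¬ (p : ℤ) ∣ B)
    (hda : (p : ℤ) ∣ A - δ) (hdb : (p : ℤ) ∣ B - δ')
    (hza : (p : ℤ) ^ z ∣ A ^ k - ε) (hzb : (p : ℤ) ^ z ∣ B ^ k - ε') :
    p ^ z ∣ Int.gcd (A - δ) (B - δ') * k := by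
  set αa := multiplicity ((p : ℤ)) (A - δ) with hαa
  set αb := multiplicity ((p : ℤ)) (B - δ') with hαb
  set v := multiplicity p k with hv
  have ba : z ≤ αa + v := lte_bound' hp hp2 hA hδ hε hk hz hpa hda hza
  have bb : z ≤ αb + v := lte_bound' hp hp2 hB hδ' hε' hk hz hpb hdb hzb
  set m := min αa αb with hm
  have hga : (p : ℤ) ^ m ∣ A - δ :=
    (pow_dvd_pow _ (min_le_left _ _)).trans (pow_multiplicity_dvd _ _)
  have hgb : (p : ℤ) ^ m ∣ B - δ' :=
    (pow_dvd_pow _ (min_le_right _ _)).trans (pow_multiplicity_dvd _ _)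
  have hg : (p : ℤ) ^ m ∣ (Int.gcd (A - δ) (B - δ') : ℤ) := Int.dvd_coe_gcd hga hgb
  have hgn : p ^ m ∣ Int.gcd (A - δ) (B - δ') := by exact_mod_cast hg
  have hkn : p ^ v ∣ k := pow_multiplicity_dvd p k
  have hzm : z ≤ m + v := by
    rcases min_cases αa αb with ⟨h1, h2⟩ | ⟨h1, h2⟩ <;> rw [hm, h1] <;> omega
  calc p ^ z ∣ p ^ (m + v) := pow_dvd_pow p hzm
    _ = p ^ m * p ^ v := pow_add p m v
    _ ∣ Int.gcd (A - δ) (B - δ') * k := mul_dvd_mul hgn hkn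

private lemma sqfree_odd' (c₁ : ℕ) (h2 : 2 < c₁) (h : Nat.gcd c₁ (Nat.totient c₁) = 1) :
    Squarefree c₁ ∧ ¬ 2 ∣ c₁ := by
  have hc0 : c₁ ≠ 0 := by omega
  constructor
  · rw [Nat.squarefree_iff_prime_squarefree]
    intro p hp hdvd
    have hpp : p.Prime := hp
    have hk2 : 2 ≤ c₁.factorization p := by
      rw [← Nat.Prime.pow_dvd_iff_le_factorization hpp hc0, pow_two]
      exact hdvd
    set m := c₁.factorization p with hm
    have hdecomp : p ^ m * (c₁ / p ^ m) = c₁ := Nat.ordProj_mul_ordCompl_eq_self c₁ p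
    have hcop : Nat.Coprime (p ^ m) (c₁ / p ^ m) :=
      Nat.Coprime.pow_left m (Nat.coprime_ordCompl hpp hc0)
    have htot : Nat.totient c₁ = Nat.totient (p ^ m) * Nat.totient (c₁ / p ^ m) := by
      rw [← hdecomp, Nat.totient_mul hcop]
      rw [hdecomp]
    have hptot : p ∣ Nat.totient (p ^ m) := by
      rw [Nat.totient_prime_pow hpp (by omega : 0 < m)]
      exact Dvd.dvd.mul_right (dvd_pow_self p (by omega : m - 1 ≠ 0)) _
    have hpc : p ∣ c₁ := (dvd_mul_right p p).trans hdvd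
    have hptot' : p ∣ Nat.totient c₁ := htot ▸ hptot.mul_right _
    have hone : p ∣ 1 := h ▸ Nat.dvd_gcd hpc hptot'
    exact hpp.one_lt.ne' (Nat.dvd_one.mp hone)
  · intro h2d
    have heven : 2 ∣ Nat.totient c₁ := (Nat.totient_even h2).two_dvd
    have : (2:ℕ) ∣ 1 := h ▸ Nat.dvd_gcd h2d heven
    omega

/-- Divisibility relations satisfied by two distinct solutions of
`a^x + b^y = c^z`. -/
theorem divisibility_relations (a b c c₁ : ℕ) (ha : 1 < a) (hb : 1 < b) (hc : 1 < c)
    (hab : Nat.gcd a b = 1) (hac : Nat.gcd a c = 1) (hbc : Nat.gcd b c = 1)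
    (hc₁c : c₁ ∣ c) (hc₁ : 2 < c₁) (hc₁phi : Nat.gcd c₁ (Nat.totient c₁) = 1)
    (E₁ : ℕ) (hEa : eOrd c₁ a = E₁) (hEb : eOrd c₁ b = E₁)
    (δa δb : ℤ) (hδa : δa = 1 ∨ δa = -1) (hδb : δb = 1 ∨ δb = -1)
    (hda : (c₁ : ℤ) ∣ (a : ℤ) ^ E₁ - δa) (hdb : (c₁ : ℤ) ∣ (b : ℤ) ^ E₁ - δb)
    (x y z X Y Z : ℕ) (hx : 0 < x) (hy : 0 < y) (hz : 0 < z)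
    (hX : 0 < X) (hY : 0 < Y) (hZ : 0 < Z)
    (h1 : a ^ x + b ^ y = c ^ z) (h2 : a ^ X + b ^ Y = c ^ Z)
    (hne : (x, y, z) ≠ (X, Y, Z)) (hzZ : z ≤ Z)
    (Δ : ℕ) (hΔ : (Δ : ℤ) = |(x : ℤ) * (Y : ℤ) - (X : ℤ) * (y : ℤ)|) :
    (((c : ℤ) ^ z ∣ (a : ℤ) ^ Δ - (-1) ^ (y + Y)) ∧
      ((c : ℤ) ^ z ∣ (b : ℤ) ^ Δ - (-1) ^ (x + X))) ∧
    E₁ ∣ Δ ∧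
    c₁ ^ z ∣ Int.gcd ((a : ℤ) ^ E₁ - δa) ((b : ℤ) ^ E₁ - δb) * (Δ / E₁) := by
  have hcpos : 0 < c := by omega
  have part1a : (c : ℤ) ^ z ∣ (a : ℤ) ^ Δ - (-1) ^ (y + Y) :=
    part_one' a b c x y z X Y Z Δ hcpos (Nat.Coprime.pow_right z hac) hzZ h1 h2 hΔ
  have part1b : (c : ℤ) ^ z ∣ (b : ℤ) ^ Δ - (-1) ^ (x + X) := by
    refine part_one' b a c y x z Y X Z Δ hcpos (Nat.Coprime.pow_right z hbc) hzZ
      (by omega) (by omega) ?_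
    rw [hΔ, abs_sub_comm]
    ring_nf
  -- c₁ divides c^z
  have hc₁cz : (c₁ : ℤ) ∣ (c : ℤ) ^ z := by
    exact_mod_cast Int.natCast_dvd_natCast.mpr (dvd_pow hc₁c hz.ne')
  have hc₁Δa : (c₁ : ℤ) ∣ (a : ℤ) ^ Δ - (-1) ^ (y + Y) := hc₁cz.trans part1a
  have hOrA : (c₁ : ℤ) ∣ (a : ℤ) ^ Δ - 1 ∨ (c₁ : ℤ) ∣ (a : ℤ) ^ Δ + 1 := by
    rcases Nat.even_or_odd (y + Y) with h | h
    · left; rwa [h.neg_one_pow] at hc₁Δa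
    · right; rw [h.neg_one_pow] at hc₁Δa; rwa [sub_neg_eq_add] at hc₁Δa
  have hcopac₁ : Nat.Coprime a c₁ := Nat.Coprime.coprime_dvd_right hc₁c hac
  have hcopbc₁ : Nat.Coprime b c₁ := Nat.Coprime.coprime_dvd_right hc₁c hbc
  obtain ⟨hE₁pos, hdvdΔ⟩ :=
    eOrd_pos_and_dvd' c₁ a hcopac₁ (by omega) E₁ hEa δa hδa hda
  have hE₁Δ : E₁ ∣ Δ := hdvdΔ Δ hOrA
  refine ⟨⟨part1a, part1b⟩, hE₁Δ, ?_⟩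
  -- Part (iii)
  set k := Δ / E₁ with hkdef
  have hkΔ : Δ = E₁ * k := (Nat.mul_div_cancel' hE₁Δ).symm
  rcases Nat.eq_zero_or_pos k with hk0 | hkpos
  · rw [hk0, mul_zero]
    exact dvd_zero _
  obtain ⟨hsq, hodd2⟩ := sqfree_odd' c₁ hc₁ hc₁phi
  set N := Int.gcd ((a : ℤ) ^ E₁ - δa) ((b : ℤ) ^ E₁ - δb) * k with hN
  have hppow : ∀ p ∈ c₁.primeFactors, p ^ z ∣ N := by
    intro p hpmem
    have hp : p.Prime := Nat.prime_of_mem_primeFactors hpmem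
    have hpc₁ : p ∣ c₁ := Nat.dvd_of_mem_primeFactors hpmem
    have hp2 : p ≠ 2 := fun h => hodd2 (h ▸ hpc₁)
    have hpc : p ∣ c := hpc₁.trans hc₁c
    have hpa : ¬ (p : ℤ) ∣ (a : ℤ) ^ E₁ := by
      intro h
      have hpra : (p : ℤ) ∣ (a : ℤ) := (Nat.prime_iff_prime_int.mp hp).dvd_of_dvd_pow h
      have hna : p ∣ a := by exact_mod_cast hpra
      have h1' : p ∣ 1 := hac ▸ Nat.dvd_gcd hna hpc
      rw [Nat.dvd_one] at h1'
      exact hp.one_lt.ne' h1'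
    have hpb : ¬ (p : ℤ) ∣ (b : ℤ) ^ E₁ := by
      intro h
      have hprb : (p : ℤ) ∣ (b : ℤ) := (Nat.prime_iff_prime_int.mp hp).dvd_of_dvd_pow h
      have hnb : p ∣ b := by exact_mod_cast hprb
      have h1' : p ∣ 1 := hbc ▸ Nat.dvd_gcd hnb hpc
      rw [Nat.dvd_one] at h1'
      exact hp.one_lt.ne' h1'
    have hpzc : (p : ℤ) ^ z ∣ (c : ℤ) ^ z :=
      pow_dvd_pow_of_dvd (Int.natCast_dvd_natCast.mpr hpc) z
    have hza : (p : ℤ) ^ z ∣ ((a : ℤ) ^ E₁) ^ k - (-1) ^ (y + Y) := by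
      rw [← pow_mul, ← hkΔ]
      exact hpzc.trans part1a
    have hzb : (p : ℤ) ^ z ∣ ((b : ℤ) ^ E₁) ^ k - (-1) ^ (x + X) := by
      rw [← pow_mul, ← hkΔ]
      exact hpzc.trans part1b
    have hpdc₁ : (p : ℤ) ∣ (c₁ : ℤ) := Int.natCast_dvd_natCast.mpr hpc₁
    have hA : (1 : ℤ) < (a : ℤ) ^ E₁ := by
      have : (1 : ℤ) < (a : ℤ) := by exact_mod_cast ha
      exact one_lt_pow₀ this hE₁pos.ne'
    have hB : (1 : ℤ) < (b : ℤ) ^ E₁ := by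
      have : (1 : ℤ) < (b : ℤ) := by exact_mod_cast hb
      exact one_lt_pow₀ this hE₁pos.ne'
    exact per_prime' hp hp2 hkpos hz hA hB hδa hδb
      (signPow' (Or.inr rfl) (y + Y)) (signPow' (Or.inr rfl) (x + X))
      hpa hpb (hpdc₁.trans hda) (hpdc₁.trans hdb) hza hzb
  have hfin : ((c₁ : ℤ)) ^ z ∣ ((N : ℕ) : ℤ) := by
    have hprod : ∏ p ∈ c₁.primeFactors, p = c₁ := Nat.prod_primeFactors_of_squarefree hsq
    rw [← hprod]
    push_cast
    rw [← Finset.prod_pow]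
    apply Finset.prod_dvd_of_coprime
    · intro p hp q hq hpq
      simp only [Function.onFun]
      exact IsCoprime.pow (Nat.isCoprime_iff_coprime.mpr
        ((Nat.coprime_primes (Nat.prime_of_mem_primeFactors (Finset.mem_coe.mp hp))
          (Nat.prime_of_mem_primeFactors (Finset.mem_coe.mp hq))).mpr hpq))
    · intro p hpmem
      have h := hppow p hpmem
      have : ((p ^ z : ℕ) : ℤ) ∣ ((N : ℕ) : ℤ) := Int.natCast_dvd_natCast.mpr h
      push_cast at this
      exact this
  exact_mod_cast hfin
end

section
/- Let c ≥ 5 be a prime and let b > 1 be an integer with gcd(b, c) = 1 such that b ≢ 1 (mod c) and b ≢ −1 (mod c). Then the equation c^Z − c^z = b^4 − b has no solution in positive integers z and Z with c^z > b. -/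
set_option maxHeartbeats 1000000


/-- For a prime `c ≥ 5` and an integer `b > 1` coprime to `c` with
`b ≢ 1 (mod c)` and `b ≢ -1 (mod c)`, the equation `c^Z - c^z = b^4 - b` has no solution
in positive integers `z, Z` with `c^z > b`. -/
theorem Y0_eq_four_no_solution (c : ℕ) (hcp : Nat.Prime c) (hc5 : 5 ≤ c)
    (b : ℕ) (hb : 1 < b) (hbc : Nat.gcd b c = 1)
    (h1 : ¬ (c : ℤ) ∣ (b : ℤ) - 1) (h2 : ¬ (c : ℤ) ∣ (b : ℤ) + 1) :
    ¬ ∃ z Z : ℕ, 0 < z ∧ 0 < Z ∧ b < c ^ z ∧ c ^ Z + b = c ^ z + b ^ 4 := by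
  rintro ⟨z, Z, hz, hZ, hbz, hEq⟩
  have hc1 : 1 < c := hcp.one_lt
  have hc0 : 0 < c := by omega
  have hb1 : 1 ≤ b := by omega
  -- Z > z
  have hb4 : b < b ^ 4 := by
    have h' : b ^ 1 < b ^ 4 := Nat.pow_lt_pow_right hb (by omega)
    simpa using h'
  have hzZ : z < Z := by
    have hlt : c ^ z < c ^ Z := by linarith only [hEq, hb4]
    exact (Nat.pow_lt_pow_iff_right hc1).mp hlt
  obtain ⟨k, rfl⟩ : ∃ k, Z = z + k := ⟨Z - z, by omega⟩
  have hk1 : 1 ≤ k := by omega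
  rw [pow_add] at hEq
  -- c^z * c^k + b = c^z + b^4
  have hNid : b ^ 4 = b + b * (b - 1) * (b ^ 2 + b + 1) := by
    obtain ⟨b', rfl⟩ : ∃ b', b = b' + 1 := ⟨b - 1, by omega⟩
    simp only [Nat.add_sub_cancel]
    ring
  rw [hNid] at hEq
  have hd0 : 0 < c ^ z := pow_pos hc0 z
  have hck1 : 1 ≤ c ^ k := Nat.one_le_iff_ne_zero.mpr (pow_ne_zero k (by omega))
  obtain ⟨K, hK⟩ : ∃ K, c ^ k = K + 1 := ⟨c ^ k - 1, by omega⟩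
  have hEq2 : c ^ z * K = b * (b - 1) * (b ^ 2 + b + 1) := by
    rw [hK, Nat.mul_add, Nat.mul_one] at hEq
    linarith only [hEq]
  have hcb : ¬ c ∣ b := by
    intro h
    have h' : c ∣ 1 := hbc ▸ Nat.dvd_gcd h dvd_rfl
    have := Nat.le_of_dvd one_pos h'
    omega
  have hcb1 : ¬ c ∣ (b - 1) := by
    intro h
    apply h1
    have h' : (c : ℤ) ∣ ((b - 1 : ℕ) : ℤ) := Int.natCast_dvd_natCast.mpr h
    rwa [Nat.cast_sub hb1, Nat.cast_one] at h'
  have hcopr : Nat.Coprime (c ^ z) (b * (b - 1)) :=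
    Nat.Coprime.pow_left z
      (((Nat.Prime.coprime_iff_not_dvd hcp).mpr hcb).mul_right
        ((Nat.Prime.coprime_iff_not_dvd hcp).mpr hcb1))
  have hmuleq : (b * (b - 1)) * (b ^ 2 + b + 1) = c ^ z * K := by
    rw [← hEq2]
  have hdN : c ^ z ∣ b ^ 2 + b + 1 :=
    Nat.Coprime.dvd_of_dvd_mul_left hcopr ⟨K, hmuleq⟩
  obtain ⟨m, hdm⟩ := hdN   -- hdm : b^2+b+1 = c^z * m
  have hm1 : 1 ≤ m := by
    rcases Nat.eq_zero_or_pos m with h | h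
    · rw [h, Nat.mul_zero] at hdm
      have hpos : 0 < b ^ 2 + b + 1 := by positivity
      linarith only [hdm, hpos]
    · exact h
  have hKv : K = b * (b - 1) * m := by
    refine Nat.eq_of_mul_eq_mul_left hd0 ?_
    rw [hEq2, hdm]; ring
  have hA2 : c ^ k + b * m = b ^ 2 * m + 1 := by
    rw [hK, hKv]
    obtain ⟨b', rfl⟩ : ∃ b', b = b' + 1 := ⟨b - 1, by omega⟩
    simp only [Nat.add_sub_cancel]
    ring
  have hcN : c ∣ b ^ 2 + b + 1 := dvd_trans (dvd_pow_self c (by omega : z ≠ 0)) ⟨m, hdm⟩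
  -- Fermat: c % 3 = 1
  haveI : Fact (Nat.Prime c) := ⟨hcp⟩
  have hb0' : (b : ZMod c) ≠ 0 := by
    rw [Ne, ZMod.natCast_eq_zero_iff]; exact hcb
  have hN0' : (b : ZMod c) ^ 2 + (b : ZMod c) + 1 = 0 := by
    have := (ZMod.natCast_eq_zero_iff (b ^ 2 + b + 1) c).mpr hcN
    push_cast at this
    exact this
  have hcube : (b : ZMod c) ^ 3 = 1 := by
    linear_combination ((b : ZMod c) - 1) * hN0'
  have hne1 : (b : ZMod c) ≠ 1 := by
    intro h
    apply h1
    have h' : (((b : ℤ) - 1 : ℤ) : ZMod c) = 0 := by push_cast; rw [h]; ring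
    exact (ZMod.intCast_zmod_eq_zero_iff_dvd _ _).mp h'
  have ho3 : orderOf (b : ZMod c) = 3 := by
    have hdvd := orderOf_dvd_of_pow_eq_one hcube
    rcases (Nat.prime_three.eq_one_or_self_of_dvd _ hdvd) with h | h
    · exact absurd (orderOf_eq_one_iff.mp h) hne1
    · exact h
  have h3c1 : 3 ∣ c - 1 := by
    rw [← ho3]
    exact orderOf_dvd_of_pow_eq_one (ZMod.pow_card_sub_one_eq_one hb0')
  have hc3 : c % 3 = 1 := by omega
  have hd3 : c ^ z % 3 = 1 := by rw [Nat.pow_mod, hc3]; norm_num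
  have hA3 : c ^ k % 3 = 1 := by rw [Nat.pow_mod, hc3]; norm_num
  -- b % 3 ≠ 2
  have hb3 : b % 3 ≠ 2 := by
    intro hb2
    have e2 : (b ^ 2 + b + 1) % 3 = 1 * (m % 3) % 3 := by
      rw [hdm, Nat.mul_mod, hd3]
    have e1 : (b ^ 2 + b + 1) % 3 = 1 := by
      have hb23 : b ^ 2 % 3 = 1 := by rw [Nat.pow_mod, hb2]
      obtain ⟨B2, hB2⟩ : ∃ x, b ^ 2 = x := ⟨_, rfl⟩
      rw [hB2] at hb23 ⊢
      omega
    have hm3 : m % 3 = 1 := by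
      rw [e2] at e1
      omega
    have hbm3 : (b * m) % 3 = 2 := by rw [Nat.mul_mod, hb2, hm3]
    have hb2m3 : (b ^ 2 * m) % 3 = 1 := by rw [Nat.mul_mod, Nat.pow_mod, hb2, hm3]
    obtain ⟨CK, hCK⟩ : ∃ x, c ^ k = x := ⟨_, rfl⟩
    obtain ⟨BM, hBM⟩ : ∃ x, b * m = x := ⟨_, rfl⟩
    obtain ⟨B2M, hB2M⟩ : ∃ x, b ^ 2 * m = x := ⟨_, rfl⟩
    rw [hCK, hBM, hB2M] at hA2
    rw [hCK] at hA3
    rw [hBM] at hbm3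
    rw [hB2M] at hb2m3
    omega
  -- b + 2 ≤ c^z
  have hne : c ^ z ≠ b + 1 := by
    intro h
    have h1' : (b + 1) ∣ b ^ 2 + b + 1 := h ▸ ⟨m, hdm⟩
    have h2' : (b + 1) ∣ b ^ 2 + b := ⟨b, by ring⟩
    have h3' := Nat.dvd_sub h1' h2'
    rw [show b ^ 2 + b + 1 - (b ^ 2 + b) = 1 from Nat.add_sub_cancel_left (b ^ 2 + b) 1] at h3'
    have := Nat.le_of_dvd one_pos h3'
    omega
  have hd2 : b + 2 ≤ c ^ z := by
    obtain ⟨D, hD⟩ : ∃ x, c ^ z = x := ⟨_, rfl⟩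
    have h1' := hbz; have h2' := hne
    rw [hD] at h1' h2' ⊢
    omega
  -- m ≤ b
  have hmb : m ≤ b := by
    by_contra h
    push_neg at h
    have h2' : (b + 2) * (b + 1) ≤ c ^ z * m :=
      Nat.mul_le_mul hd2 (by omega)
    rw [← hdm] at h2'
    have e : (b + 2) * (b + 1) = b ^ 2 + 3 * b + 2 := by ring
    linarith only [h2', e]
  -- key divisibility
  have key : ∀ T : ℕ, T ∣ (b ^ 2 + b + 1) → T ∣ c ^ k → T ∣ 3 * m ^ 2 + 1 := by
    intro T hTN hTA
    have h1' : (T : ℤ) ∣ ((b : ℤ) ^ 2 + (b : ℤ) + 1) := by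
      have := Int.natCast_dvd_natCast.mpr hTN
      push_cast at this
      exact this
    have h2' : (T : ℤ) ∣ (c : ℤ) ^ k := by exact_mod_cast hTA
    have hA2Z : ((c : ℤ)) ^ k + (b : ℤ) * m = (b : ℤ) ^ 2 * m + 1 := by exact_mod_cast hA2
    have hres : (T : ℤ) ∣ 3 * (m : ℤ) ^ 2 + 1 := by
      have iden : 3 * (m : ℤ) ^ 2 + 1 =
          4 * (m : ℤ) ^ 2 * ((b : ℤ) ^ 2 + (b : ℤ) + 1) -
          ((m : ℤ) * ((b : ℤ) ^ 2 + (b : ℤ) + 1) - (c : ℤ) ^ k) * ((2 * (b : ℤ) + 1) * (m : ℤ) + 1) := by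
        linear_combination (-((2 * (b : ℤ) + 1) * (m : ℤ) + 1)) * hA2Z
      rw [iden]
      exact dvd_sub (h1'.mul_left _) ((dvd_sub (h1'.mul_left m) h2').mul_right _)
    exact_mod_cast hres
  rcases lt_or_ge b 9 with hb9 | hb9
  · -- finite cases b ∈ {2,...,8}
    interval_cases b
    · exact hb3 rfl
    · -- b = 3
      norm_num at hcN
      have hc13 : c = 13 := (Nat.prime_dvd_prime_iff_eq hcp (by norm_num)).mp hcN
      subst hc13
      norm_num at hdm
      have hz1 : z = 1 := by
        by_contra h
        have hdd : (13 : ℕ) ^ 2 ∣ 13 ^ z := pow_dvd_pow 13 (by omega)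
        have h3' : (13 : ℕ) ^ z ∣ 13 := ⟨m, hdm⟩
        have := Nat.le_of_dvd (by norm_num) (hdd.trans h3')
        norm_num at this
      subst hz1
      norm_num at hdm
      have hm' : m = 1 := by omega
      subst hm'
      norm_num at hA2
      have hdk : (13 : ℕ) ∣ 13 ^ k := dvd_pow_self 13 (by omega)
      obtain ⟨CK, hCK⟩ : ∃ x, (13 : ℕ) ^ k = x := ⟨_, rfl⟩
      rw [hCK] at hA2 hdk
      omega
    · -- b = 4
      norm_num at hcN
      have hc7 : c = 7 := by
        have h37 : c ∣ 3 * 7 := by rw [show (3 * 7 : ℕ) = 21 from rfl]; exact hcN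
        rcases (Nat.Prime.dvd_mul hcp).mp h37 with h | h
        · have := Nat.le_of_dvd (by norm_num) h; omega
        · exact (Nat.prime_dvd_prime_iff_eq hcp (by norm_num)).mp h
      subst hc7
      norm_num at hdm
      have hz1 : z = 1 := by
        by_contra h
        have hdd : (7 : ℕ) ^ 2 ∣ 7 ^ z := pow_dvd_pow 7 (by omega)
        have h3' : (7 : ℕ) ^ z ∣ 21 := ⟨m, hdm⟩
        have := Nat.le_of_dvd (by norm_num) (hdd.trans h3')
        norm_num at this
      subst hz1
      norm_num at hdm
      have hm' : m = 3 := by omega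
      subst hm'
      norm_num at hA2
      have hdk : (7 : ℕ) ∣ 7 ^ k := dvd_pow_self 7 (by omega)
      obtain ⟨CK, hCK⟩ : ∃ x, (7 : ℕ) ^ k = x := ⟨_, rfl⟩
      rw [hCK] at hA2 hdk
      omega
    · exact hb3 rfl
    · -- b = 6
      norm_num at hcN
      have hc43 : c = 43 := (Nat.prime_dvd_prime_iff_eq hcp (by norm_num)).mp hcN
      subst hc43
      norm_num at hdm
      have hz1 : z = 1 := by
        by_contra h
        have hdd : (43 : ℕ) ^ 2 ∣ 43 ^ z := pow_dvd_pow 43 (by omega)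
        have h3' : (43 : ℕ) ^ z ∣ 43 := ⟨m, hdm⟩
        have := Nat.le_of_dvd (by norm_num) (hdd.trans h3')
        norm_num at this
      subst hz1
      norm_num at hdm
      have hm' : m = 1 := by omega
      subst hm'
      norm_num at hA2
      have hdk : (43 : ℕ) ∣ 43 ^ k := dvd_pow_self 43 (by omega)
      obtain ⟨CK, hCK⟩ : ∃ x, (43 : ℕ) ^ k = x := ⟨_, rfl⟩
      rw [hCK] at hA2 hdk
      omega
    · -- b = 7
      norm_num at hcN
      have hc19 : c = 19 := by
        have h37 : c ∣ 3 * 19 := by rw [show (3 * 19 : ℕ) = 57 from rfl]; exact hcN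
        rcases (Nat.Prime.dvd_mul hcp).mp h37 with h | h
        · have := Nat.le_of_dvd (by norm_num) h; omega
        · exact (Nat.prime_dvd_prime_iff_eq hcp (by norm_num)).mp h
      subst hc19
      norm_num at hdm
      have hz1 : z = 1 := by
        by_contra h
        have hdd : (19 : ℕ) ^ 2 ∣ 19 ^ z := pow_dvd_pow 19 (by omega)
        have h3' : (19 : ℕ) ^ z ∣ 57 := ⟨m, hdm⟩
        have := Nat.le_of_dvd (by norm_num) (hdd.trans h3')
        norm_num at this
      subst hz1
      norm_num at hdm
      have hm' : m = 3 := by omega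
      subst hm'
      norm_num at hA2
      have hdk : (19 : ℕ) ∣ 19 ^ k := dvd_pow_self 19 (by omega)
      obtain ⟨CK, hCK⟩ : ∃ x, (19 : ℕ) ^ k = x := ⟨_, rfl⟩
      rw [hCK] at hA2 hdk
      omega
    · exact hb3 rfl
  · -- b ≥ 9
    rcases le_or_gt k z with hkz | hzk
    · -- k ≤ z : impossible
      have hkN : c ^ k ∣ b ^ 2 + b + 1 := dvd_trans (pow_dvd_pow c hkz) ⟨m, hdm⟩
      have h31 := key (c ^ k) hkN dvd_rfl
      have hle : c ^ k ≤ 3 * m ^ 2 + 1 := Nat.le_of_dvd (by positivity) h31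
      have e1 : m * m ≤ b * m := mul_le_mul_left hmb m
      have e2 : 9 * (b * m) ≤ b * (b * m) := mul_le_mul_left hb9 (b * m)
      have e3 : b * 1 ≤ b * m := mul_le_mul_right hm1 b
      linarith only [hle, hA2, e1, e2, e3, hb9]
    · -- z < k
      obtain ⟨j, rfl⟩ : ∃ j, k = z + j := ⟨k - z, by omega⟩
      have hj1 : 1 ≤ j := by omega
      rw [pow_add] at hA2
      -- ℤ copies
      have hdmZ : ((b : ℤ) ^ 2 + (b : ℤ) + 1) = (c : ℤ) ^ z * m := by exact_mod_cast hdm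
      have hA2Z : (c : ℤ) ^ z * (c : ℤ) ^ j + (b : ℤ) * m = (b : ℤ) ^ 2 * m + 1 := by
        exact_mod_cast hA2
      have hstar : c ^ z * m ^ 2 + 1 = c ^ z * c ^ j + (2 * b + 1) * m := by
        zify
        linear_combination (-(m : ℤ)) * hdmZ - hA2Z
      have h19 : 19 ≤ (2 * b + 1) * m := by
        calc (19 : ℕ) ≤ 2 * b + 1 := by omega
        _ ≤ (2 * b + 1) * m := Nat.le_mul_of_pos_right _ hm1
      have hwlt : c ^ j < m ^ 2 := by
        have h2' : c ^ z * c ^ j < c ^ z * m ^ 2 := by linarith only [hstar, h19]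
        exact lt_of_mul_lt_mul_left h2' (Nat.zero_le _)
      obtain ⟨v, hv2⟩ : ∃ v, m ^ 2 = c ^ j + v := ⟨m ^ 2 - c ^ j, (Nat.add_sub_cancel' hwlt.le).symm⟩
      have hvd : (2 * b + 1) * m = c ^ z * v + 1 := by
        have hst := hstar
        rw [hv2, Nat.mul_add] at hst
        linarith only [hst]
      have hv1 : 1 ≤ v := by
        rcases Nat.eq_zero_or_pos v with h | h
        · exfalso
          rw [h, Nat.mul_zero] at hvd
          linarith only [hvd, h19]
        · exact h
      have hvdZ : (2 * (b : ℤ) + 1) * m = (c : ℤ) ^ z * v + 1 := by exact_mod_cast hvd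
      have hbv : c ^ z * (b * v) + (b + (b + 2) * m) = 2 * (c ^ z * m ^ 2) := by
        zify
        linear_combination (-(b : ℤ)) * hvdZ + 2 * (m : ℤ) * hdmZ
      have hbv2 : b * v ≤ 2 * m ^ 2 := by
        have e : c ^ z * (2 * m ^ 2) = 2 * (c ^ z * m ^ 2) := by ring
        have h' : c ^ z * (b * v) ≤ c ^ z * (2 * m ^ 2) := by linarith only [hbv, e, Nat.zero_le ((b + 2) * m), Nat.zero_le b]
        exact le_of_mul_le_mul_left h' hd0
      obtain ⟨u, hu2⟩ : ∃ u, 2 * m ^ 2 = b * v + u := ⟨2 * m ^ 2 - b * v, (Nat.add_sub_cancel' hbv2).symm⟩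
      have hdu : c ^ z * u = b + (b + 2) * m := by
        have e : c ^ z * (b * v + u) = c ^ z * (b * v) + c ^ z * u := by ring
        have e2 : 2 * (c ^ z * m ^ 2) = c ^ z * (b * v) + c ^ z * u := by
          rw [← e, ← hu2]; ring
        linarith only [hbv, e2]
      have hu1 : 1 ≤ u := by
        rcases Nat.eq_zero_or_pos u with h | h
        · exfalso
          rw [h, Nat.mul_zero] at hdu
          linarith only [hdu, hb9, Nat.zero_le ((b + 2) * m)]
        · exact h
      have hNm : (b + 2) * m ≤ b ^ 2 + b + 1 := by
        rw [hdm]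
        exact mul_le_mul_left hd2 m
      have hub : u ≤ b := by
        by_contra h
        push_neg at h
        have h2' : c ^ z * (b + 1) ≤ c ^ z * u := mul_le_mul_right (by omega) _
        have h3' : (b + 2) * (b + 1) ≤ c ^ z * (b + 1) := mul_le_mul_left hd2 _
        have e : (b + 2) * (b + 1) = b ^ 2 + 3 * b + 2 := by ring
        linarith only [h2', h3', e, hdu, hNm]
      have hbm2 : b + 1 ≤ 2 * m ^ 2 := by
        have e : b * 1 ≤ b * v := mul_le_mul_right hv1 b
        linarith only [hu2, hu1, e]
      have hds := key (c ^ z) ⟨m, hdm⟩ ⟨c ^ j, pow_add c z j⟩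
      obtain ⟨s, hs⟩ := hds
      rcases le_or_gt j z with hjz | hzj
      · -- j ≤ z : forces b ≤ 8, contradiction
        have hwd : c ^ j ∣ 3 * m ^ 2 + 1 := dvd_trans (pow_dvd_pow c hjz) ⟨s, hs⟩
        have hsplit : 3 * m ^ 2 + 1 = c ^ j * 3 + (3 * v + 1) := by rw [hv2]; ring
        have h3v : c ^ j ∣ 3 * v + 1 := by
          rw [hsplit] at hwd
          exact (Nat.dvd_add_right (dvd_mul_right (c ^ j) 3)).mp hwd
        have hwle : c ^ j ≤ 3 * v + 1 := Nat.le_of_dvd (by omega) h3v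
        have hm4 : m ^ 2 ≤ 4 * v + 1 := by linarith only [hv2, hwle]
        rcases le_or_gt m 2 with hm | hm
        · have h4 : m ^ 2 ≤ 2 ^ 2 := Nat.pow_le_pow_left hm 2
          linarith only [hbm2, h4, hb9]
        · -- m ≥ 3
          have h5 : b * m ^ 2 ≤ b * (4 * v + 1) := mul_le_mul_right hm4 b
          have e5 : b * (4 * v + 1) = 4 * (b * v) + b := by ring
          have h5' : b * m ^ 2 + 4 ≤ 8 * m ^ 2 + b := by
            linarith only [h5, e5, hu2, hu1]
          have h9 : 3 ^ 2 ≤ m ^ 2 := Nat.pow_le_pow_left (by omega) 2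
          have hz3 : 9 * (b - 8) ≤ (b - 8) * m ^ 2 := by
            calc 9 * (b - 8) = (b - 8) * 3 ^ 2 := by ring
            _ ≤ (b - 8) * m ^ 2 := mul_le_mul_right h9 _
          have hsub : (b - 8) * m ^ 2 + 8 * m ^ 2 = b * m ^ 2 := by
            have : b - 8 + 8 = b := by omega
            calc (b - 8) * m ^ 2 + 8 * m ^ 2 = (b - 8 + 8) * m ^ 2 := by ring
            _ = b * m ^ 2 := by rw [this]
          have hsub2 : 9 * (b - 8) + 72 = 9 * b := by omega
          linarith only [h5', hz3, hsub, hsub2, hb9]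
      · -- z < j
        obtain ⟨i, rfl⟩ : ∃ i, j = z + i := ⟨j - z, by omega⟩
        have hi1 : 1 ≤ i := by omega
        rw [pow_add] at hv2
        have hsv : c ^ z * s = c ^ z * (3 * c ^ i) + (3 * v + 1) := by
          rw [← hs, hv2]; ring
        have hsgt : 3 * c ^ i < s := by
          by_contra h
          push_neg at h
          have h' : c ^ z * s ≤ c ^ z * (3 * c ^ i) := mul_le_mul_right h _
          linarith only [hsv, h']
        obtain ⟨r, hr⟩ : ∃ r, s = 3 * c ^ i + r := ⟨s - 3 * c ^ i, (Nat.add_sub_cancel' hsgt.le).symm⟩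
        have hr1 : 1 ≤ r := by linarith only [hr, hsgt]
        have hdr : c ^ z * r = 3 * v + 1 := by
          have e : c ^ z * (3 * c ^ i + r) = c ^ z * (3 * c ^ i) + c ^ z * r := by ring
          rw [hr, e] at hsv
          linarith only [hsv]
        have hr6 : r ≤ 6 := by
          by_contra h
          push_neg at h
          have s1 : c ^ z * 7 ≤ c ^ z * r := mul_le_mul_right (by omega) _
          have s2 : b * (3 * v + 1) ≤ 6 * m ^ 2 + b := by
            have e : b * (3 * v + 1) = 3 * (b * v) + b := by ring
            linarith only [e, hu2, hu1]
          have s3 : b * (c ^ z * 7) ≤ b * (c ^ z * r) := mul_le_mul_right s1 b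
          rw [hdr] at s3
          have s4 : 7 * (b * (b + 2)) ≤ b * (c ^ z * 7) := by
            have e' : b * (b + 2) ≤ b * c ^ z := mul_le_mul_right hd2 b
            have e2 : b * (c ^ z * 7) = 7 * (b * c ^ z) := by ring
            linarith only [e', e2]
          have hmm : m * m ≤ b * b := Nat.mul_le_mul hmb hmb
          have e7 : 7 * (b * (b + 2)) = 7 * (b * b) + 14 * b := by ring
          have e8 : m ^ 2 = m * m := pow_two m
          have h81 : 81 ≤ b * b := Nat.mul_le_mul hb9 hb9
          linarith only [s2, s3, s4, hmm, e7, e8, h81, hb9]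
        have hr3 : r % 3 = 1 := by
          have e := Nat.mul_mod (c ^ z) r 3
          rw [hdr, hd3] at e
          omega
        have hQ1 : b * (3 * v + 1) + 3 * u = 6 * m ^ 2 + b := by
          have e : b * (3 * v + 1) = 3 * (b * v) + b := by ring
          linarith only [e, hu2]
        have hQ2 : c ^ z * (2 * s) = 6 * m ^ 2 + 2 := by
          have e : c ^ z * (2 * s) = 2 * (c ^ z * s) := by ring
          rw [e, ← hs]; ring
        have hQ1' : c ^ z * (b * r) + 3 * u = 6 * m ^ 2 + b := by
          have e : c ^ z * (b * r) = b * (c ^ z * r) := by ring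
          rw [e, hdr]; exact hQ1
        have hdich : 2 * s = b * r ∨ 2 * s = b * r + 1 := by
          rcases lt_trichotomy (2 * s) (b * r) with h | h | h
          · exfalso
            have hle' : 2 * s + 1 ≤ b * r := h
            have hmul := mul_le_mul_right hle' (c ^ z)
            have e : c ^ z * (2 * s + 1) = c ^ z * (2 * s) + c ^ z := by ring
            linarith only [hmul, e, hQ2, hQ1', hu1, hd2]
          · left; exact h
          · rcases Nat.eq_or_lt_of_le (show b * r + 1 ≤ 2 * s from h) with h' | h'
            · right; exact h'.symm
            · exfalso
              have hmul := mul_le_mul_right (show b * r + 2 ≤ 2 * s from h') (c ^ z)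
              have e : c ^ z * (b * r + 2) = c ^ z * (b * r) + 2 * c ^ z := by ring
              linarith only [hmul, e, hQ2, hQ1', hub, hd2]
        rcases hdich with h2s | h2s
        · -- 2s = br  ⇒  b = 3u + 2, contradicting b % 3 ≠ 2
          have e3 : c ^ z * (b * r) = 6 * m ^ 2 + 2 := by
            rw [show c ^ z * (b * r) = c ^ z * (2 * s) from by rw [h2s], hQ2]
          have hb32 : b = 3 * u + 2 := by linarith only [e3, hQ1']
          exact hb3 (by omega)
        · -- 2s = br + 1
          have h6e : b * r + 1 = 6 * c ^ i + 2 * r := by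
            have e : 2 * s = 6 * c ^ i + 2 * r := by rw [hr]; ring
            linarith only [e, h2s]
          rcases (show r = 1 ∨ r = 4 by omega) with hr' | hr'
          · -- r = 1 : b - 1 = 6 c^i, so c ∣ b - 1, contradicting h1
            subst hr'
            have hbE : b = 6 * c ^ i + 1 := by linarith only [h6e]
            apply h1
            have hdvd' : (c : ℤ) ∣ 6 * (c : ℤ) ^ i :=
              Dvd.dvd.mul_left (dvd_pow_self (c : ℤ) (by omega : i ≠ 0)) 6
            have e2 : (b : ℤ) - 1 = 6 * (c : ℤ) ^ i := by
              have hcast : (b : ℤ) = 6 * (c : ℤ) ^ i + 1 := by exact_mod_cast hbE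
              linarith only [hcast]
            rw [e2]
            exact hdvd'
          · -- r = 4 : parity contradiction
            subst hr'
            obtain ⟨E, hE⟩ : ∃ x, c ^ i = x := ⟨_, rfl⟩
            rw [hE] at h6e
            omega
end
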